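/- arXiv:2504.18712 — 12 statements merged into one kernel-verified Lean document; each statement's English description precedes it below -/
import Mathlib

section
/- The set of all values of the series ∑_{n=1}^∞ 1/((n+1)(n+2)⋯(n+f(n))), as (f(n))_{n=1}^∞ ranges over all sequences of positive integers with f(n) → ∞ as n → ∞, is equal to the whole open interval (0, ∞). That is: for every real x > 0 there exists a function f : ℕ → ℕ with f(n) ≥ 1 for all n and lim_{n→∞} f(n) = ∞ such that ∑_{n=1}^∞ 1/∏_{i=1}^{f(n)} (n+i) = x, and conversely every such sum is a positive real number. -/
/-!
Given `x > 0`, the indices are chosen greedily together with a floor `K + 1` that never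
decreases: at each position take the least index `≥ K + 1` whose term fits strictly into the
remainder, and raise the floor as soon as the remainder drops below the largest sum that the
later positions can still produce with the raised floor. After each raise the remainder stays
below that bound, so it tends to `0` as soon as the floor tends to infinity.

The floor cannot stay at a value `K + 1` forever. The excess of the remainder over the bound for
floor `K + 2` is then a positive walk that either stays put or descends by
`term n (K + 1) - term n (K + 2)`; such a walk must eventually descend at every step, so the
index is eventually constantly `K + 1`. For `K = 0` this subtracts a tail of the harmonic series
from a positive remainder; for `K ≥ 1` it contradicts the remainder being strictly below the
full tail `∑_{m ≥ n} term m (K + 1)`. Exact hits of the bound would freeze the floor, and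
are avoided by skipping the offending index (`Admissible`).
-/

open Filter Topology

namespace AscFactorialSeries

/-- `term n k = 1 / ((n + 2)(n + 3)⋯(n + k + 1))`, the `n`-th summand of the series when
`f (n + 1) = k`. -/
noncomputable def term (n k : ℕ) : ℝ := ((n + 2).ascFactorial k : ℝ)⁻¹

/-- For `k ≥ 1` this is `∑_{m ≥ n} term m (k + 1)` (`hasSum_tail`). -/
noncomputable def tail (n k : ℕ) : ℝ := term n k / k

lemma prod_Icc_add_eq_ascFactorial (m k : ℕ) :
    ∏ i ∈ Finset.Icc 1 k, (m + i) = (m + 1).ascFactorial k := by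
  induction k with
  | zero => rfl
  | succ k ih =>
    rw [Finset.prod_Icc_succ_top (by omega), ih, Nat.ascFactorial_succ]
    ring

lemma term_pos (n k : ℕ) : 0 < term n k :=
  inv_pos.2 (by exact_mod_cast Nat.ascFactorial_pos (n + 1) k)

lemma term_one (n : ℕ) : term n 1 = 1 / ((n + 2 : ℕ) : ℝ) := by
  simp [term, Nat.ascFactorial_succ]

lemma term_succ (n k : ℕ) : term n (k + 1) * (n + k + 2) = term n k := by
  have h := (Nat.cast_pos (α := ℝ)).2 (Nat.ascFactorial_pos (n + 1) k)
  simp only [term, Nat.ascFactorial_succ]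
  push_cast
  field_simp
  ring

lemma term_succ_left (n k : ℕ) : term (n + 1) k = (n + 2) * term n (k + 1) := by
  have h := (Nat.cast_pos (α := ℝ)).2 (Nat.ascFactorial_pos (n + 2) k)
  have key := Nat.succ_ascFactorial (n + 2) k
  simp only [term, Nat.ascFactorial_succ, ← key]
  push_cast
  field_simp

lemma term_sub_term_succ_left (n k : ℕ) : term n k - term (n + 1) k = k * term n (k + 1) := by
  rw [← term_succ n k, term_succ_left]; ring

lemma term_succ_lt (n k : ℕ) : term n (k + 1) < term n k := by
  rw [← term_succ n k]
  have := term_pos n (k + 1)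
  nlinarith

lemma term_antitone (n : ℕ) : Antitone (term n) :=
  antitone_nat_of_succ_le fun k => (term_succ_lt n k).le

lemma tendsto_term {k : ℕ} (hk : 1 ≤ k) : Tendsto (fun n => term n k) atTop (𝓝 0) := by
  have h : Tendsto (fun n : ℕ => 1 / ((n + 2 : ℕ) : ℝ)) atTop (𝓝 0) :=
    (tendsto_add_atTop_iff_nat 2).2 tendsto_one_div_atTop_nhds_zero_nat
  refine squeeze_zero (fun n => (term_pos n k).le) (fun n => ?_) h
  rw [← term_one]
  exact term_antitone n hk

lemma exists_term_lt (n K : ℕ) {r : ℝ} (hr : 0 < r) : ∃ k, K ≤ k ∧ term n k < r := by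
  obtain ⟨k, hk⟩ := exists_nat_gt (max (K : ℝ) r⁻¹)
  refine ⟨k, by exact_mod_cast ((le_max_left _ _).trans_lt hk).le, ?_⟩
  have hpow : (k : ℝ) < (n + 2 : ℕ).ascFactorial k := by
    exact_mod_cast (Nat.lt_pow_self (by omega)).trans_le (Nat.pow_succ_le_ascFactorial _ k)
  rw [term, inv_lt_comm₀ (by positivity) hr]
  exact ((le_max_right _ _).trans_lt hk).trans hpow

lemma tail_eq_term_add_tail {k : ℕ} (hk : 1 ≤ k) (n : ℕ) :
    tail n k = term n (k + 1) + tail (n + 1) k := by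
  have hk' : (k : ℝ) ≠ 0 := by positivity
  have := term_sub_term_succ_left n k
  simp only [tail]
  field_simp
  linarith

lemma tail_pos {k : ℕ} (hk : 1 ≤ k) (n : ℕ) : 0 < tail n k :=
  div_pos (term_pos n k) (by exact_mod_cast hk)

lemma tail_le_term_one {k : ℕ} (hk : 1 ≤ k) (n : ℕ) : tail n k ≤ term n 1 :=
  (div_le_self (term_pos n k).le (by exact_mod_cast hk)).trans (term_antitone n hk)

lemma tendsto_tail {k : ℕ} (hk : 1 ≤ k) : Tendsto (fun n => tail n k) atTop (𝓝 0) := by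
  simpa [tail] using (tendsto_term hk).div_const (k : ℝ)

lemma term_succ_le_tail_succ {k n : ℕ} (hk : 1 ≤ k) (hkn : k ≤ n + 2) :
    term n (k + 1) ≤ tail (n + 1) k := by
  have hk' : (0 : ℝ) < k := by exact_mod_cast hk
  have hkn' : (k : ℝ) ≤ n + 2 := by exact_mod_cast hkn
  have := term_pos n (k + 1)
  rw [tail, term_succ_left, le_div_iff₀ hk']
  nlinarith

lemma tail_succ_add_term_le {k n : ℕ} (hk : 1 ≤ k) (hkn : k ≤ n + 1) :
    tail (n + 1) (k + 1) + term n (k + 1) ≤ tail (n + 1) k := by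
  have hk' : (1 : ℝ) ≤ k := by exact_mod_cast hk
  have hkn' : (k : ℝ) ≤ n + 1 := by exact_mod_cast hkn
  have hb := term_pos n (k + 2)
  have h1 := term_succ n (k + 1)
  simp only [tail, term_succ_left]
  push_cast at h1 ⊢
  rw [← h1, div_add' _ _ _ (by positivity), div_le_div_iff₀ (by positivity) (by positivity)]
  have : (0:ℝ) ≤ (k + 1) * (n + (k + 1) + 2) * (n + 1 - k) := by
    apply mul_nonneg (by positivity); linarith
  nlinarith [mul_pos hb (show (0:ℝ) < k by linarith)]

lemma hasSum_tail {k : ℕ} (hk : 1 ≤ k) (n : ℕ) :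
    HasSum (fun j => term (n + j) (k + 1)) (tail n k) := by
  have hpartial :
      ∀ m, ∑ j ∈ Finset.range m, term (n + j) (k + 1) = tail n k - tail (n + m) k := by
    intro m
    induction m with
    | zero => simp
    | succ m ih =>
      rw [Finset.sum_range_succ, ih, tail_eq_term_add_tail hk (n + m), ← add_assoc]
      ring
  rw [hasSum_iff_tendsto_nat_of_nonneg (fun j => (term_pos _ _).le)]
  simp_rw [hpartial]
  simpa using tendsto_const_nhds.sub
    ((tendsto_tail hk).comp (tendsto_atTop_mono (Nat.le_add_left · n) tendsto_id))

lemma not_summable_term_one : ¬ Summable (fun n => term n 1) := by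
  rw [funext term_one, summable_nat_add_iff (f := fun m : ℕ => 1 / (m : ℝ)) 2]
  exact Real.not_summable_one_div_natCast

noncomputable def drop (n k : ℕ) : ℝ := term n k - term n (k + 1)

lemma drop_eq (n k : ℕ) : drop n k = (n + k + 1) * term n (k + 1) := by
  rw [drop, ← term_succ n k]; ring

lemma drop_succ_lt {k : ℕ} (hk : 1 ≤ k) (n : ℕ) : drop (n + 1) k < drop n k := by
  have hk' : (1 : ℝ) ≤ k := by exact_mod_cast hk
  have h := term_succ n (k + 1)
  have hc := term_pos n (k + 2)
  simp only [drop_eq, term_succ_left] at h ⊢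
  push_cast at h ⊢
  rw [← h]
  nlinarith [mul_pos hc (show (0:ℝ) < (n + k + 2) * k - 1 by nlinarith)]

lemma drop_lt_drop_add_drop {k n : ℕ} (hk : 1 ≤ k) (hn : k ^ 2 ≤ n) :
    drop n k < drop (n + 1) k + drop (n + 2) k := by
  have hk' : (1 : ℝ) ≤ k := by exact_mod_cast hk
  have hn' : (k : ℝ) ^ 2 ≤ n := by exact_mod_cast hn
  have h1 := term_succ n (k + 1)
  have h2 := term_succ n (k + 2)
  have hc := term_pos n (k + 3)
  simp only [drop_eq, term_succ_left] at h1 h2 ⊢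
  push_cast at h1 h2 ⊢
  rw [← h1, ← h2]
  have hP : (0 : ℝ) < (n + k + 2) * (n + 2) * (n + k + 4) + (n + k + 3) * (n + 3) * (n + 2)
      - (n + k + 1) * (n + k + 4) * (n + k + 3) := by
    have hkn : (k : ℝ) ≤ n := by nlinarith
    nlinarith [mul_nonneg (sub_nonneg.2 hkn) (sub_nonneg.2 hkn),
      mul_nonneg (sub_nonneg.2 hn') (by linarith : (0:ℝ) ≤ n),
      mul_nonneg (sub_nonneg.2 hkn) (by linarith : (0:ℝ) ≤ n),
      mul_nonneg (sub_nonneg.2 hkn) (by linarith : (0:ℝ) ≤ k)]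
  nlinarith [mul_pos hc hP]

lemma term_sub_tail_lt_drop {k n : ℕ} (hk : 1 ≤ k) (hn : k ^ 2 ≤ n) :
    term n k - tail n k < drop (n + 1) k := by
  have hk' : (1 : ℝ) ≤ k := by exact_mod_cast hk
  have hn' : (k : ℝ) ^ 2 ≤ n := by exact_mod_cast hn
  have h1 := term_succ n k
  have h2 := term_succ n (k + 1)
  have hc := term_pos n (k + 2)
  simp only [tail, drop_eq, term_succ_left]
  push_cast at h1 h2 ⊢
  rw [← h1, ← h2, sub_lt_iff_lt_add, ← sub_lt_iff_lt_add', lt_div_iff₀ (by linarith)]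
  nlinarith [mul_pos hc (show (0:ℝ) < n + 3 - k ^ 2 by linarith)]

lemma sum_range_le_of_forall_sub {r u : ℕ → ℝ} {N : ℕ} (hr : ∀ n ≥ N, 0 < r n)
    (h : ∀ n ≥ N, r (n + 1) = r n - u n) (m : ℕ) :
    ∑ j ∈ Finset.range m, u (N + j) ≤ r N := by
  have hpartial : ∑ j ∈ Finset.range m, u (N + j) = r N - r (N + m) := by
    induction m with
    | zero => simp
    | succ m ih =>
      rw [Finset.sum_range_succ, ih, ← add_assoc, h (N + m) (by omega)]
      ring
  linarith [hr (N + m) (by omega)]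

lemma not_forall_succ_eq_sub_term {r : ℕ → ℝ} {M K : ℕ} (hr : ∀ n ≥ M, 0 < r n)
    (hK : 0 < K → r M < tail M K) : ¬ ∀ n ≥ M, r (n + 1) = r n - term n (K + 1) := by
  intro hsteps
  have hpartial := sum_range_le_of_forall_sub hr hsteps
  rcases Nat.eq_zero_or_pos K with rfl | hK0
  · refine not_summable_term_one ((summable_nat_add_iff M).1 ?_)
    refine summable_of_sum_range_le (fun n => (term_pos _ _).le) (c := r M) fun m => ?_
    simpa [add_comm] using hpartial m
  · have hle := Real.tsum_le_of_sum_range_le (fun n => (term_pos _ _).le) hpartial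
    rw [(hasSum_tail hK0 M).tsum_eq] at hle
    linarith [hK hK0]

/-- Once at or below `θ` the walk would be frozen there, which `θ → 0` forbids; strictly between
`θ n` and `d n` it would drop below `0`; and a hit of `d n` is followed by two descents that
overshoot. -/
lemma threshold_walk_descends {θ d e : ℕ → ℝ} {N : ℕ} (hθ : Tendsto θ atTop (𝓝 0))
    (hθd : ∀ n ≥ N, θ n < d (n + 1))
    (hd : ∀ n ≥ N, d (n + 1) < d n ∧ d n < d (n + 1) + d (n + 2))
    (he : ∀ n ≥ N, 0 < e n)
    (hstep : ∀ n ≥ N, e (n + 1) = if θ n < e n ∧ e n ≠ d n then e n - d n else e n) :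
    ∀ n ≥ N, θ n < e n ∧ e n ≠ d n := by
  have stays : ∀ n ≥ N, e n ≤ θ n → e (n + 1) = e n ∧ e (n + 1) ≤ θ (n + 1) := by
    intro n hn hle
    have hconst : e (n + 1) = e n := by
      rw [hstep n hn, if_neg (fun h => (not_lt.2 hle) h.1)]
    refine ⟨hconst, not_lt.1 fun hlt => ?_⟩
    have hne : e (n + 1) ≠ d (n + 1) := by linarith [hθd n hn]
    have := hstep (n + 1) (by omega)
    rw [if_pos ⟨hlt, hne⟩] at this
    linarith [he (n + 2) (by omega), hθd n hn]
  have above : ∀ n ≥ N, θ n < e n := by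
    intro m hm
    by_contra! hle
    have hforever : ∀ j, e (m + j) = e m ∧ e (m + j) ≤ θ (m + j) := by
      intro j
      induction j with
      | zero => exact ⟨rfl, hle⟩
      | succ j ih =>
        obtain ⟨h1, h2⟩ := stays (m + j) (by omega) ih.2
        exact ⟨h1.trans ih.1, h2⟩
    obtain ⟨j, hj⟩ := ((hθ.eventually (gt_mem_nhds (he m hm))).and
      (eventually_ge_atTop m)).exists
    obtain ⟨k, rfl⟩ := Nat.exists_eq_add_of_le hj.2
    linarith [(hforever k).1, (hforever k).2, hj.1]
  have d_le : ∀ n ≥ N, d n ≤ e n := by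
    intro n hn
    by_contra! hlt
    have := hstep n hn
    rw [if_pos ⟨above n hn, hlt.ne⟩] at this
    linarith [he (n + 1) (by omega)]
  refine fun n hn => ⟨above n hn, fun hclash => ?_⟩
  have h1 : e (n + 1) = d n := by
    rw [hstep n hn, if_neg (fun h => h.2 hclash), hclash]
  have h2 := hstep (n + 1) (by omega)
  rw [if_pos ⟨above (n + 1) (by omega), by linarith [(hd n hn).1]⟩, h1] at h2
  linarith [d_le (n + 2) (by omega), (hd n hn).2]

/-- The new remainder must not be `tail (n + 1) (K + 1)`: with floor `K + 1` that value is
produced only by the constant index `K + 1`, so the floor could never rise again. -/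
def Admissible (n : ℕ) (r : ℝ) (K k : ℕ) : Prop :=
  K + 1 ≤ k ∧ term n k < r ∧ r - term n k ≠ tail (n + 1) (K + 1)

noncomputable def pick (n : ℕ) (r : ℝ) (K : ℕ) : ℕ := sInf {k | Admissible n r K k}

section pick

variable {n K : ℕ} {r : ℝ}

lemma exists_admissible (hr : 0 < r) : ∃ k, Admissible n r K k := by
  obtain ⟨k, hKk, hk⟩ := exists_term_lt n (K + 1) hr
  have hlt := term_succ_lt n k
  by_cases hclash : r - term n k = tail (n + 1) (K + 1)
  · exact ⟨k + 1, by omega, hlt.trans hk, fun h => by linarith⟩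
  · exact ⟨k, hKk, hk, hclash⟩

lemma pick_admissible (hr : 0 < r) : Admissible n r K (pick n r K) :=
  Nat.sInf_mem (exists_admissible hr)

lemma pick_eq_of_admissible (hr : 0 < r) (h : Admissible n r K (K + 1)) :
    pick n r K = K + 1 :=
  le_antisymm (Nat.sInf_le h) (pick_admissible hr).1

lemma le_or_eq_of_lt_pick (h : K + 1 < pick n r K) :
    r ≤ term n (pick n r K - 1) ∨ r - term n (pick n r K - 1) = tail (n + 1) (K + 1) := by
  have hnot : ¬ Admissible n r K (pick n r K - 1) :=
    Nat.notMem_of_lt_sInf (show pick n r K - 1 < pick n r K by omega)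
  simp only [Admissible, not_and_or, not_le, not_lt, not_not] at hnot
  exact hnot.resolve_left (by omega)

lemma sub_term_pick_lt (h : K + 1 < pick n r K) :
    r - term n (pick n r K) < tail (n + 1) (K + 1) + term n (K + 1) := by
  have hmono : term n (pick n r K - 1) ≤ term n (K + 1) := term_antitone n (by omega)
  have := term_pos n (pick n r K)
  have := tail_pos (Nat.le_add_left 1 K) (n + 1)
  rcases le_or_eq_of_lt_pick h with h' | h' <;> linarith

end pick

/-- `s.1` is the remainder and `s.2 + 1` the floor. -/
noncomputable def greedyStep (n : ℕ) (s : ℝ × ℕ) : ℝ × ℕ :=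
  let r := s.1 - term n (pick n s.1 s.2)
  (r, if r < tail (n + 1) (s.2 + 1) then s.2 + 1 else s.2)

noncomputable def greedyState (x : ℝ) : ℕ → ℝ × ℕ
  | 0 => (x, 0)
  | n + 1 => greedyStep n (greedyState x n)

noncomputable def remainder (x : ℝ) (n : ℕ) : ℝ := (greedyState x n).1

noncomputable def level (x : ℝ) (n : ℕ) : ℕ := (greedyState x n).2

noncomputable def index (x : ℝ) (n : ℕ) : ℕ := pick n (remainder x n) (level x n)

section greedy

variable {x : ℝ}

lemma remainder_succ (x : ℝ) (n : ℕ) :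
    remainder x (n + 1) = remainder x n - term n (index x n) := rfl

lemma level_succ (x : ℝ) (n : ℕ) : level x (n + 1) =
    if remainder x (n + 1) < tail (n + 1) (level x n + 1) then level x n + 1 else level x n := rfl

lemma level_monotone (x : ℝ) : Monotone (level x) :=
  monotone_nat_of_le_succ fun n => by rw [level_succ]; split_ifs <;> omega

lemma remainder_pos (hx : 0 < x) (n : ℕ) : 0 < remainder x n := by
  induction n with
  | zero => exact hx
  | succ n ih =>
    exact sub_pos.2 (pick_admissible ih).2.1

lemma level_le (x : ℝ) (n : ℕ) : level x n ≤ n := by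
  induction n with
  | zero => exact le_rfl
  | succ n ih => rw [level_succ]; split_ifs <;> omega

lemma remainder_lt_tail (hx : 0 < x) {n : ℕ} (hK : 0 < level x n) :
    remainder x n < tail n (level x n) := by
  induction n with
  | zero => exact absurd hK (lt_irrefl 0)
  | succ n ih =>
    rw [level_succ] at hK ⊢
    split_ifs with hrise
    · exact hrise
    rw [if_neg hrise] at hK
    rw [remainder_succ, index]
    rcases (pick_admissible (n := n) (K := level x n) (remainder_pos hx n)).1.lt_or_eq
      with hgt | heq
    · have := level_le x n
      exact (sub_term_pick_lt hgt).trans_le (tail_succ_add_term_le hK (by omega))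
    · rw [← heq]
      linarith [ih hK, tail_eq_term_add_tail hK n]

lemma tail_lt_remainder_of_level_eq (hx : 0 < x) {n : ℕ} (h : level x (n + 1) = level x n) :
    tail (n + 1) (level x n + 1) < remainder x (n + 1) := by
  rw [level_succ] at h
  split_ifs at h with hrise
  · omega
  exact (not_lt.1 hrise).lt_of_ne' (pick_admissible (remainder_pos hx n)).2.2

lemma index_le_of_tail_lt {n : ℕ}
    (h₀ : tail n (level x n + 1) < remainder x n)
    (h₁ : tail (n + 1) (level x n + 1) < remainder x (n + 1)) :
    index x n ≤ level x n + 2 := by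
  by_contra! hgt
  have hmono : term n (index x n - 1) ≤ term n (level x n + 2) := term_antitone n (by omega)
  have hrec := tail_eq_term_add_tail (Nat.le_add_left 1 (level x n)) n
  rw [remainder_succ] at h₁
  have := term_pos n (index x n)
  have := level_le x n
  have := term_succ_le_tail_succ (n := n) (Nat.le_add_left 1 (level x n)) (by omega)
  rcases le_or_eq_of_lt_pick (show level x n + 1 < index x n by omega) with h | h <;>
    · unfold index at *
      linarith

lemma remainder_sub_tail_succ (hx : 0 < x) {n : ℕ}
    (h₀ : tail n (level x n + 1) < remainder x n)
    (h₁ : tail (n + 1) (level x n + 1) < remainder x (n + 1)) :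
    let F := level x n + 1
    let e := remainder x n - tail n F
    remainder x (n + 1) - tail (n + 1) F =
      if term n F - tail n F < e ∧ e ≠ drop n F then e - drop n F else e := by
  intro F e
  have hrec := tail_eq_term_add_tail (Nat.le_add_left 1 (level x n)) n
  have hcond : (term n F - tail n F < e ∧ e ≠ drop n F) ↔
      Admissible n (remainder x n) (level x n) F := by
    simp only [Admissible, drop, e, F, le_refl, true_and, sub_lt_sub_iff_right]
    refine and_congr_right fun _ => not_congr ⟨fun h => ?_, fun h => ?_⟩ <;> linarith
  rw [remainder_succ]
  split_ifs with h
  · rw [index, pick_eq_of_admissible (remainder_pos hx n) (hcond.1 h)]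
    simp only [drop, e]
    linarith
  · have hge := (pick_admissible (n := n) (K := level x n) (remainder_pos hx n)).1
    have hne : index x n ≠ F :=
      fun heq => h (hcond.2 (heq ▸ pick_admissible (remainder_pos hx n)))
    rw [show index x n = F + 1 by have := index_le_of_tail_lt h₀ h₁; unfold index at *; omega]
    simp only [e]
    linarith

lemma level_not_eventually_const (hx : 0 < x) (N : ℕ) :
    ¬ ∀ n ≥ N, level x n = level x N := by
  intro hconst
  set K := level x N
  have hF : 1 ≤ K + 1 := Nat.le_add_left 1 K
  have habove : ∀ n ≥ N + 1, tail n (K + 1) < remainder x n := by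
    intro n hn
    obtain ⟨m, rfl⟩ := Nat.exists_eq_add_of_le' (show 1 ≤ n by omega)
    have h := tail_lt_remainder_of_level_eq hx
      ((hconst (m + 1) (by omega)).trans (hconst m (by omega)).symm)
    rwa [hconst m (by omega)] at h
  set M := max (N + 1) ((K + 1) ^ 2)
  have hdescends := threshold_walk_descends (N := M)
    (θ := fun n => term n (K + 1) - tail n (K + 1)) (d := fun n => drop n (K + 1))
    (e := fun n => remainder x n - tail n (K + 1))
    (by simpa using (tendsto_term hF).sub (tendsto_tail hF))
    (fun n hn => term_sub_tail_lt_drop hF (by omega))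
    (fun n hn => ⟨drop_succ_lt hF n, drop_lt_drop_add_drop hF (by omega)⟩)
    (fun n hn => sub_pos.2 (habove n (by omega)))
    (fun n hn => by
      have hl := hconst n (by omega)
      have h := remainder_sub_tail_succ hx (n := n) (by rw [hl]; exact habove n (by omega))
        (by rw [hl]; exact habove (n + 1) (by omega))
      rw [hl] at h
      exact h)
  have hsteps : ∀ n ≥ M, remainder x (n + 1) = remainder x n - term n (K + 1) := by
    intro n hn
    obtain ⟨hθ, hd⟩ := hdescends n hn
    have hadm : Admissible n (remainder x n) K (K + 1) := by
      refine ⟨le_rfl, by linarith, fun h => hd ?_⟩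
      rw [drop]
      linarith [tail_eq_term_add_tail hF n]
    rw [remainder_succ, index, hconst n (by omega),
      pick_eq_of_admissible (remainder_pos hx n) hadm]
  refine not_forall_succ_eq_sub_term (fun n _ => remainder_pos hx n) (fun hK => ?_) hsteps
  have hM := hconst M (by omega)
  rw [← hM] at hK ⊢
  exact remainder_lt_tail hx hK

lemma tendsto_level (hx : 0 < x) : Tendsto (level x) atTop atTop := by
  refine (level_monotone x).tendsto_atTop_atTop fun b => ?_
  induction b with
  | zero => exact ⟨0, Nat.zero_le _⟩
  | succ b ih =>
    obtain ⟨n, hn⟩ := ih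
    obtain ⟨m, hm, hne⟩ := not_forall₂.1 (level_not_eventually_const hx n)
    exact ⟨m, (lt_of_le_of_ne (level_monotone x hm) (Ne.symm hne)).trans_le' hn⟩

lemma tendsto_index (hx : 0 < x) : Tendsto (index x) atTop atTop :=
  tendsto_atTop_mono (fun n => (Nat.le_succ _).trans (pick_admissible (remainder_pos hx n)).1)
    (tendsto_level hx)

lemma tendsto_remainder (hx : 0 < x) : Tendsto (remainder x) atTop (𝓝 0) := by
  refine squeeze_zero' (Eventually.of_forall fun n => (remainder_pos hx n).le) ?_
    (tendsto_term le_rfl)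
  filter_upwards [(tendsto_level hx).eventually_ge_atTop 1] with n hn
  exact (remainder_lt_tail hx hn).le.trans (tail_le_term_one hn n)

lemma hasSum_term_index (hx : 0 < x) : HasSum (fun n => term n (index x n)) x := by
  rw [hasSum_iff_tendsto_nat_of_nonneg fun n => (term_pos _ _).le]
  have hpartial : ∀ n, ∑ i ∈ Finset.range n, term i (index x i) = x - remainder x n := by
    intro n
    induction n with
    | zero => simp [remainder, greedyState]
    | succ n ih => rw [Finset.sum_range_succ, ih, remainder_succ]; ring
  simp_rw [hpartial]
  simpa using tendsto_const_nhds.sub (tendsto_remainder hx)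

end greedy

end AscFactorialSeries

open AscFactorialSeries in
/-- The set of all sums `∑_{n=1}^∞ 1/((n+1)(n+2)⋯(n+f(n)))`, as `f` ranges over all
sequences of positive integers tending to infinity, equals the whole interval `(0, ∞)`. -/
theorem stmt0 :
    {x : ℝ | ∃ f : ℕ → ℕ, (∀ n, 1 ≤ f n) ∧ Tendsto f atTop atTop ∧
      HasSum (fun n : ℕ =>
        (1 : ℝ) / ((∏ i ∈ Finset.Icc 1 (f (n + 1)), (n + 1 + i) : ℕ) : ℝ)) x}
      = Set.Ioi 0 := by
  have hterm :
      ∀ n k, (1 : ℝ) / ((∏ i ∈ Finset.Icc 1 k, (n + 1 + i) : ℕ) : ℝ) = term n k := by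
    intro n k
    rw [prod_Icc_add_eq_ascFactorial, one_div]
    rfl
  ext x
  simp only [hterm, Set.mem_ofPred_eq, Set.mem_Ioi]
  constructor
  · rintro ⟨f, -, -, hsum⟩
    exact (term_pos 0 _).trans_le (le_hasSum hsum 0 fun n _ => (term_pos n _).le)
  · intro hx
    refine ⟨fun n => index x (n - 1), fun n => ?_,
      (tendsto_index hx).comp (tendsto_sub_atTop_nat 1), by simpa using hasSum_term_index hx⟩
    exact (Nat.le_add_left 1 _).trans (pick_admissible (remainder_pos hx _)).1
end

section
/- For every rational number q > 0 there exists a sequence (f(n))_{n=1}^∞ of positive integers with lim_{n→∞} f(n) = ∞ such that ∑_{n=1}^∞ 1/∏_{i=1}^{f(n)} (n+i) = q. In particular, the series ∑_{n=1}^∞ 1/((n+1)(n+2)⋯(n+f(n))) can have a rational sum even though f(n) → ∞, giving a negative answer to the Erdős–Graham question. -/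
/-!
Write `term m k = 1 / ((m + 1) ⋯ (m + k))`. Since `k * term m (k + 1) = term m k - term (m + 1) k`,
the series `∑_{i ≥ m} term i (k + 1)` telescopes to `tail m k = term m k / k`.

The exponents are chosen greedily against the remainder, never below a current level `k`, and the
level goes up as soon as the remainder drops below `tail m k`; the remainder then always stays
below `∑_{i ≥ m} term i k`, hence tends to `0` once `k ≥ 2`. The level cannot stall at some `k`:
write the remainder as `tail m k + σ` with `σ ≥ 0`. While `σ` is large the greedy exponent is `k`,
which cannot last forever; afterwards it is `k + 1`, which keeps `σ`, until the gap
`term m k - term m (k + 1)` has shrunk to just above `σ`, and then one exponent `k` pushes the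
remainder below `tail m k`. For `k² ≤ m + 1` the gap shrinks by less than `tail (m + 1) k` per step,
so this moment is not skipped. The exceptional case `σ = 0`, where greedy would pick `k + 1`
forever, is broken by picking `k + 2` once.
-/

open Filter Finset Topology

namespace ErdosGraham

noncomputable def term (m k : ℕ) : ℝ := 1 / ((m + 1).ascFactorial k : ℝ)

lemma prod_Icc_add_eq_ascFactorial (m k : ℕ) :
    ∏ i ∈ Icc 1 k, (m + i) = (m + 1).ascFactorial k := by
  induction k with
  | zero => simp
  | succ k ih =>
    rw [prod_Icc_succ_top (by omega), ih, Nat.ascFactorial_succ, Nat.mul_comm,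
      show m + (k + 1) = m + 1 + k by omega]

lemma term_pos (m k : ℕ) : 0 < term m k := by
  have := Nat.ascFactorial_pos m k
  unfold term
  positivity

lemma term_eq_mul_term_succ (m k : ℕ) : term m k = (m + k + 1) * term m (k + 1) := by
  have := Nat.ascFactorial_pos m k
  simp only [term, Nat.ascFactorial_succ]
  push_cast
  field_simp
  ring

lemma term_succ_eq_mul (m k : ℕ) : term m (k + 1) = (m + k + 2) * term m (k + 2) := by
  rw [term_eq_mul_term_succ m (k + 1)]
  push_cast
  ring

lemma term_succ_left (m k : ℕ) : term (m + 1) k = (m + 1) * term m (k + 1) := by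
  have := Nat.ascFactorial_pos (m + 1) k
  have := Nat.ascFactorial_pos m k
  simp only [term, Nat.ascFactorial_succ]
  rw [← Nat.succ_ascFactorial (m + 1) k]
  push_cast
  field_simp

lemma term_one (m : ℕ) : term m 1 = 1 / (m + 1) := by
  simp [term, Nat.ascFactorial_succ]

lemma term_antitone (m : ℕ) : Antitone (term m) := by
  refine antitone_nat_of_succ_le fun k => ?_
  rw [term_eq_mul_term_succ m k]
  nlinarith [term_pos m (k + 1)]

lemma term_succ_lt (m : ℕ) {k : ℕ} (hk : k ≠ 0) : term m (k + 1) < term m k := by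
  have : (1 : ℝ) ≤ k := by exact_mod_cast Nat.one_le_iff_ne_zero.mpr hk
  rw [term_eq_mul_term_succ m k]
  nlinarith [term_pos m (k + 1)]

lemma term_succ_le_one_div (m k : ℕ) : term m (k + 1) ≤ 1 / (k + 1) := by
  have hle : term m k ≤ 1 := by
    have := Nat.ascFactorial_pos m k
    rw [term, div_le_one (by positivity)]
    exact_mod_cast this
  have : (0 : ℝ) ≤ m := m.cast_nonneg
  rw [le_div_iff₀ (by positivity)]
  nlinarith [term_eq_mul_term_succ m k, term_pos m (k + 1)]

lemma tendsto_term {k : ℕ} (hk : k ≠ 0) (m : ℕ) :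
    Tendsto (fun n => term (m + n) k) atTop (𝓝 0) := by
  refine squeeze_zero (fun n => (term_pos _ _).le)
    (fun n => (term_antitone _ (Nat.one_le_iff_ne_zero.mpr hk)).trans_eq (term_one _))
    ((tendsto_one_div_add_atTop_nhds_zero_nat (𝕜 := ℝ)).comp
      (tendsto_atTop_mono (Nat.le_add_left · m) tendsto_id))

noncomputable def tail (m k : ℕ) : ℝ := term m k / k

lemma tail_pos {k : ℕ} (hk : k ≠ 0) (m : ℕ) : 0 < tail m k :=
  div_pos (term_pos m k) (by exact_mod_cast Nat.pos_of_ne_zero hk)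

lemma tail_le_term (m k : ℕ) : tail m k ≤ term m k := by
  rcases Nat.eq_zero_or_pos k with rfl | hk
  · simp [tail, (term_pos m 0).le]
  · exact div_le_self (term_pos m k).le (by exact_mod_cast hk)

lemma tail_eq_add {k : ℕ} (hk : k ≠ 0) (m : ℕ) :
    tail m k = term m (k + 1) + tail (m + 1) k := by
  have hmul : k * term m (k + 1) = term m k - term (m + 1) k := by
    rw [term_eq_mul_term_succ m k, term_succ_left]
    ring
  have : (k : ℝ) ≠ 0 := by exact_mod_cast hk
  simp only [tail]
  field_simp
  linarith

lemma hasSum_tail {k : ℕ} (hk : k ≠ 0) (m : ℕ) :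
    HasSum (fun i => term (m + i) (k + 1)) (tail m k) := by
  have hsum : ∀ n, ∑ i ∈ range n, term (m + i) (k + 1) = tail m k - tail (m + n) k := by
    intro n
    induction n with
    | zero => simp
    | succ n ih => rw [sum_range_succ, ih, tail_eq_add hk (m + n), ← add_assoc]; ring
  rw [hasSum_iff_tendsto_nat_of_nonneg (fun _ => (term_pos _ _).le)]
  simp only [hsum]
  simpa [tail] using ((tendsto_term hk m).div_const (k : ℝ)).const_sub (tail m k)

lemma term_succ_lt_tail {k : ℕ} (hk : k ≠ 0) (m : ℕ) : term m (k + 1) < tail m k := by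
  rw [tail_eq_add hk]
  linarith [tail_pos hk (m + 1)]

lemma term_succ_lt_tail_succ {k m : ℕ} (hk : k ≠ 0) (hkm : k ≤ m) :
    term m (k + 1) < tail (m + 1) k := by
  have hk' : (0 : ℝ) < k := by exact_mod_cast Nat.pos_of_ne_zero hk
  have hkm' : (k : ℝ) < m + 1 := by exact_mod_cast Nat.lt_succ_of_le hkm
  rw [tail, term_succ_left, lt_div_iff₀ hk']
  nlinarith [term_pos m (k + 1)]

lemma term_sub_tail_lt {k m : ℕ} (hk : k ≠ 0) (hkm : k ^ 2 ≤ m + 1) :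
    term m k - tail m k < term (m + 1) k - term (m + 1) (k + 1) := by
  have hk' : (1 : ℝ) ≤ k := by exact_mod_cast Nat.one_le_iff_ne_zero.mpr hk
  have hkm' : (k : ℝ) ^ 2 ≤ m + 1 := by exact_mod_cast hkm
  have hm : (0 : ℝ) ≤ m := m.cast_nonneg
  have hp := term_pos m (k + 2)
  rw [tail, term_succ_left, term_succ_left, term_eq_mul_term_succ m k, term_succ_eq_mul,
    ← sub_pos]
  generalize term m (k + 2) = p at *
  have key : (m + 1 : ℝ) * ((m + k + 2) * p) - (m + 1) * p -
      ((m + k + 1) * ((m + k + 2) * p) - (m + k + 1) * ((m + k + 2) * p) / k) =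
      (m + k + 1) * p * (m + 2 - k ^ 2) / k := by
    field_simp
    ring
  rw [key]
  exact div_pos (mul_pos (mul_pos (by linarith) hp) (by linarith)) (by linarith)

lemma term_succ_sub_lt {m : ℕ} (hm : m ≠ 0) (k : ℕ) :
    term m (k + 1) - term m (k + 2) < term (m + 1) k - term (m + 1) (k + 1) := by
  have hm' : (1 : ℝ) ≤ m := by exact_mod_cast Nat.one_le_iff_ne_zero.mpr hm
  have hk : (0 : ℝ) ≤ k := k.cast_nonneg
  have hp := term_pos m (k + 2)
  rw [term_succ_left, term_succ_left, term_succ_eq_mul]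
  generalize term m (k + 2) = p at *
  nlinarith [mul_pos (mul_pos (by linarith : (0 : ℝ) < m) (by linarith : (0 : ℝ) < m + k + 1)) hp]

/-- `r < ∑_{i ≥ m} term i k`, read in `[0, ∞]`: the series diverges for `k = 1`. -/
def BelowTail (m k : ℕ) (r : ℝ) : Prop := ∃ n, r < ∑ i ∈ range n, term (m + i) k

lemma belowTail_one (m : ℕ) (r : ℝ) : BelowTail m 1 r := by
  have hdiv : ¬ Summable fun i => term (m + i) 1 := by
    have : (fun i => term (m + i) 1) = fun i => 1 / ((i + (m + 1) : ℕ) : ℝ) := by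
      ext i
      rw [term_one]
      push_cast
      ring_nf
    rw [this, summable_nat_add_iff (f := fun n => 1 / (n : ℝ))]
    exact Real.not_summable_one_div_natCast
  rw [not_summable_iff_tendsto_nat_atTop_of_nonneg fun _ => (term_pos _ _).le] at hdiv
  exact (hdiv.eventually_gt_atTop r).exists

lemma belowTail_succ_of_lt_tail {m k : ℕ} {r : ℝ} (hk : k ≠ 0) (hr : r < tail m k) :
    BelowTail m (k + 1) r :=
  (((hasSum_iff_tendsto_nat_of_nonneg (fun _ => (term_pos _ _).le) _).mp
    (hasSum_tail hk m)).eventually (lt_mem_nhds hr)).exists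

lemma belowTail_succ_of_le_term {m k : ℕ} {r : ℝ} (hk : k ≠ 0) (hkm : k ≤ m + 1)
    (hr : r ≤ term m k) : BelowTail (m + 1) k r := by
  obtain ⟨j, rfl⟩ := Nat.exists_eq_add_one_of_ne_zero hk
  rcases Nat.eq_zero_or_pos j with rfl | hj
  · exact belowTail_one _ _
  · exact belowTail_succ_of_lt_tail hj.ne'
      (hr.trans_lt (term_succ_lt_tail_succ hj.ne' (by omega)))

lemma BelowTail.sub_term {m k : ℕ} {r : ℝ} (h : BelowTail m k r) :
    BelowTail (m + 1) k (r - term m k) := by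
  obtain ⟨_ | n, hn⟩ := h
  · exact ⟨0, by simp only [range_zero, sum_empty] at hn ⊢; linarith [term_pos m k]⟩
  · refine ⟨n, ?_⟩
    rw [sum_range_succ'] at hn
    simp only [add_zero, ← add_assoc, add_right_comm m _ 1] at hn
    linarith

lemma BelowTail.lt_term_one {m k : ℕ} {r : ℝ} (h : BelowTail m k r) (hk : 2 ≤ k) :
    r < term m 1 := by
  obtain ⟨n, hn⟩ := h
  calc r < ∑ i ∈ range n, term (m + i) k := hn
    _ ≤ ∑ i ∈ range n, term (m + i) 2 := sum_le_sum fun _ _ => term_antitone _ hk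
    _ ≤ tail m 1 := sum_le_hasSum _ (fun _ _ => (term_pos _ _).le) (hasSum_tail one_ne_zero m)
    _ = term m 1 := by simp [tail]

noncomputable def greedy (m k : ℕ) (r : ℝ) : ℕ := sInf {j | k ≤ j ∧ term m j < r}

lemma greedy_mem {m k : ℕ} {r : ℝ} (hr : 0 < r) :
    k ≤ greedy m k r ∧ term m (greedy m k r) < r := by
  refine Nat.sInf_mem (s := {j | k ≤ j ∧ term m j < r}) ?_
  obtain ⟨J, hJ⟩ := exists_nat_one_div_lt hr
  refine ⟨max k J + 1, by omega, (term_succ_le_one_div m _).trans_lt (lt_of_le_of_lt ?_ hJ)⟩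
  gcongr
  exact_mod_cast le_max_right k J

lemma greedy_eq {m k j : ℕ} {r : ℝ} (hkj : k ≤ j) (hj : term m j < r)
    (hmin : ∀ i, k ≤ i → i < j → r ≤ term m i) : greedy m k r = j := by
  obtain ⟨hk, hlt⟩ := greedy_mem (m := m) (k := k) ((term_pos m j).trans hj)
  exact le_antisymm (Nat.sInf_le ⟨hkj, hj⟩) (not_lt.mp fun h => (hmin _ hk h).not_gt hlt)

/-- Greedy, except at a remainder equal to `tail m k = ∑_{i ≥ m} term i (k + 1)`, which greedy
would follow forever without ever raising the level. -/
noncomputable def choice (m k : ℕ) (r : ℝ) : ℕ := if r = tail m k then k + 2 else greedy m k r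

lemma le_choice {m k : ℕ} {r : ℝ} (hr : 0 < r) : k ≤ choice m k r := by
  unfold choice
  split_ifs
  · omega
  · exact (greedy_mem hr).1

lemma term_choice_lt {m k : ℕ} {r : ℝ} (hk : k ≠ 0) (hr : 0 < r) : term m (choice m k r) < r := by
  unfold choice
  split_ifs with h
  · exact h ▸ (term_antitone m (Nat.le_succ _)).trans_lt (term_succ_lt_tail hk m)
  · exact (greedy_mem hr).2

lemma choice_tail (m k : ℕ) : choice m k (tail m k) = k + 2 := if_pos rfl

lemma choice_of_term_lt {m k : ℕ} {r : ℝ} (hr : term m k < r) : choice m k r = k := by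
  rw [choice, if_neg ((tail_le_term m k).trans_lt hr).ne', greedy_eq le_rfl hr]
  intro i hi hik
  omega

lemma choice_of_tail_lt {m k : ℕ} {r : ℝ} (hk : k ≠ 0) (hr : tail m k < r)
    (hr' : r ≤ term m k) : choice m k r = k + 1 := by
  rw [choice, if_neg hr.ne', greedy_eq (Nat.le_succ k) ((term_succ_lt_tail hk m).trans hr)]
  intro i hi hik
  rwa [show i = k by omega]

lemma le_term_of_choice_ne {m k : ℕ} {r : ℝ} (h : choice m k r ≠ k) : r ≤ term m k :=
  not_lt.mp fun hr => h (choice_of_term_lt hr)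

noncomputable def step (m : ℕ) (s : ℝ × ℕ) : ℝ × ℕ :=
  let r := s.1 - term m (choice m s.2 s.1)
  (r, if r < tail (m + 1) s.2 then s.2 + 1 else s.2)

structure Admissible (m k : ℕ) (r : ℝ) : Prop where
  pos : 0 < r
  level_ne_zero : k ≠ 0
  level_le : k ≤ m + 1
  belowTail : BelowTail m k r

lemma Admissible.step {m k : ℕ} {r : ℝ} (h : Admissible m k r) :
    Admissible (m + 1) (step m (r, k)).2 (step m (r, k)).1 := by
  have hpos : 0 < r - term m (choice m k r) := sub_pos.mpr (term_choice_lt h.level_ne_zero h.pos)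
  have hk := h.level_le
  dsimp only [ErdosGraham.step]
  split_ifs with hup
  · exact ⟨hpos, by omega, by omega, belowTail_succ_of_lt_tail h.level_ne_zero hup⟩
  · refine ⟨hpos, h.level_ne_zero, by omega, ?_⟩
    by_cases hc : choice m k r = k
    · rw [hc]
      exact h.belowTail.sub_term
    · refine belowTail_succ_of_le_term h.level_ne_zero hk ?_
      linarith [le_term_of_choice_ne hc, term_pos m (choice m k r)]

/-- The remainders `R j`, at positions `m + j`, of a run whose level stays `k` forever. -/
structure Stuck (k m : ℕ) (R : ℕ → ℝ) : Prop where
  step_eq : ∀ j, R (j + 1) = R j - term (m + j) (choice (m + j) k (R j))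
  tail_le : ∀ j, tail (m + j) k ≤ R j

namespace Stuck

variable {k m : ℕ} {R : ℕ → ℝ}

lemma shift (h : Stuck k m R) (i : ℕ) : Stuck k (m + i) (fun j => R (i + j)) where
  step_eq j := by simpa only [add_assoc] using h.step_eq (i + j)
  tail_le j := by simpa only [add_assoc] using h.tail_le (i + j)

lemma false_of_mem_Ioo (h : Stuck k m R) (hk : k ≠ 0) (hkm : k ^ 2 ≤ m + 1)
    (hR : R 0 ∈ Set.Ioo (tail m k) (term m k + tail (m + 1) k)) : False := by
  set σ := R 0 - tail m k
  have hσ₀ : 0 < σ := sub_pos.mpr hR.1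
  have hwait : ∀ j, R j = tail (m + j) k + σ ∧ σ < term (m + j) k - term (m + j) (k + 1) := by
    intro j
    induction j with
    | zero =>
      have := tail_eq_add hk m
      exact ⟨by simp [σ], by simp only [add_zero]; linarith [hR.2]⟩
    | succ j ih =>
      obtain ⟨hRj, hσ⟩ := ih
      have htail := tail_eq_add hk (m + j)
      have hle : R j ≤ term (m + j) k := by
        by_contra! hlt
        have := h.tail_le (j + 1)
        rw [h.step_eq, choice_of_term_lt hlt, ← add_assoc] at this
        linarith
      have hRj' : R (j + 1) = tail (m + j + 1) k + σ := by
        rw [h.step_eq, choice_of_tail_lt hk (by linarith [tail_pos hk (m + j + 1)]) hle]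
        linarith
      have := term_sub_tail_lt hk (hkm.trans (by omega) : k ^ 2 ≤ m + j + 1)
      rw [← add_assoc]
      exact ⟨hRj', by linarith⟩
  obtain ⟨J, hJ⟩ := ((tendsto_term hk m).eventually (gt_mem_nhds hσ₀)).exists
  linarith [(hwait J).2, term_pos (m + J) (k + 1)]

lemma false_of_eq_tail (h : Stuck k m R) (hk : k ≠ 0) (hkm : k ^ 2 ≤ m + 1) (hm : m ≠ 0)
    (hR : R 0 = tail m k) : False := by
  have hR₁ : R 1 = tail (m + 1) k + (term m (k + 1) - term m (k + 2)) := by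
    rw [h.step_eq 0, add_zero, hR, choice_tail, tail_eq_add hk m]
    ring
  have hgap := term_succ_sub_lt hm k
  have hpos := term_succ_lt m (Nat.succ_ne_zero k)
  have htail := tail_eq_add hk (m + 1)
  refine (h.shift 1).false_of_mem_Ioo hk (hkm.trans (Nat.le_succ _)) ⟨?_, ?_⟩ <;>
    simp only [add_zero] <;> linarith

lemma false_of_forall_term_lt (h : Stuck k m R) (hbelow : BelowTail m k (R 0))
    (htake : ∀ j, term (m + j) k < R j) : False := by
  have hR : ∀ n, R n = R 0 - ∑ i ∈ range n, term (m + i) k := by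
    intro n
    induction n with
    | zero => simp
    | succ n ih => rw [h.step_eq, choice_of_term_lt (htake n), ih, sum_range_succ]; ring
  obtain ⟨n, hn⟩ := hbelow
  have := h.tail_le n
  have : 0 ≤ tail (m + n) k := div_nonneg (term_pos _ _).le k.cast_nonneg
  linarith [hR n]

lemma false_of_belowTail (h : Stuck k m R) (hk : k ≠ 0) (hkm : k ^ 2 ≤ m + 1) (hm : m ≠ 0)
    (hbelow : BelowTail m k (R 0)) : False := by
  by_cases htake : ∀ j, term (m + j) k + tail (m + j + 1) k ≤ R j
  · exact h.false_of_forall_term_lt hbelow fun j => by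
      linarith [htake j, tail_pos hk (m + j + 1)]
  · obtain ⟨j, hj⟩ := not_forall.mp htake
    have hkm' : k ^ 2 ≤ m + j + 1 := hkm.trans (by omega)
    rcases (h.tail_le j).eq_or_lt with heq | hlt
    · exact (h.shift j).false_of_eq_tail hk hkm' (by omega) (by simpa using heq.symm)
    · exact (h.shift j).false_of_mem_Ioo hk hkm' ⟨by simpa using hlt, by simpa using not_le.mp hj⟩

end Stuck

noncomputable def orbit (a : ℕ) (r : ℝ) : ℕ → ℝ × ℕ
  | 0 => (r, 1)
  | n + 1 => step (a + n) (orbit a r n)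

section Orbit

variable (a : ℕ) (r : ℝ)

noncomputable def remainder (n : ℕ) : ℝ := (orbit a r n).1

noncomputable def level (n : ℕ) : ℕ := (orbit a r n).2

noncomputable def exponent (n : ℕ) : ℕ := choice (a + n) (level a r n) (remainder a r n)

lemma remainder_succ (n : ℕ) :
    remainder a r (n + 1) = remainder a r n - term (a + n) (exponent a r n) := rfl

lemma level_succ (n : ℕ) : level a r (n + 1) =
    if remainder a r (n + 1) < tail (a + n + 1) (level a r n) then level a r n + 1
    else level a r n :=
  rfl

lemma level_monotone : Monotone (level a r) :=
  monotone_nat_of_le_succ fun n => by rw [level_succ]; split_ifs <;> omega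

lemma sum_range_term_exponent (n : ℕ) :
    ∑ i ∈ range n, term (a + i) (exponent a r i) = r - remainder a r n := by
  induction n with
  | zero => simp [remainder, orbit]
  | succ n ih => rw [sum_range_succ, ih, remainder_succ]; ring

variable {a r}

lemma admissible_orbit (hr : 0 < r) (n : ℕ) :
    Admissible (a + n) (level a r n) (remainder a r n) := by
  induction n with
  | zero => exact ⟨hr, one_ne_zero, by simp [level, orbit], belowTail_one _ _⟩
  | succ n ih => exact ih.step

lemma not_eventually_level_eq (hr : 0 < r) (k N : ℕ) : ¬ ∀ n ≥ N, level a r n = k := by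
  intro hN
  set M := max N (k ^ 2)
  have hstuck : Stuck k (a + (M + 1)) fun j => remainder a r (M + 1 + j) := by
    refine ⟨fun j => ?_, fun j => ?_⟩
    · rw [← add_assoc, remainder_succ, exponent, hN _ (by omega), add_assoc a]
    · have h := level_succ a r (M + j)
      rw [hN (M + j + 1) (by omega), hN (M + j) (by omega)] at h
      split_ifs at h with hlt
      · omega
      · rw [show M + 1 + j = M + j + 1 by omega, show a + (M + 1) + j = a + (M + j) + 1 by omega]
        exact not_lt.mp hlt
  have hadm := admissible_orbit (a := a) hr (M + 1)
  rw [hN (M + 1) (by omega)] at hadm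
  exact hstuck.false_of_belowTail hadm.level_ne_zero (by omega) (by omega) hadm.belowTail

lemma tendsto_level (hr : 0 < r) : Tendsto (level a r) atTop atTop := by
  refine tendsto_atTop_atTop_of_monotone (level_monotone a r) fun b => ?_
  induction b with
  | zero => exact ⟨0, Nat.zero_le _⟩
  | succ b ih =>
    obtain ⟨n, hn⟩ := ih
    by_contra! hlt
    exact not_eventually_level_eq hr b n fun i hi =>
      le_antisymm (Nat.lt_succ_iff.mp (hlt i)) (hn.trans (level_monotone a r hi))

lemma tendsto_remainder (hr : 0 < r) : Tendsto (remainder a r) atTop (𝓝 0) := by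
  refine squeeze_zero' (Eventually.of_forall fun n => (admissible_orbit hr n).pos.le) ?_
    (tendsto_term one_ne_zero a)
  filter_upwards [(tendsto_level hr).eventually_ge_atTop 2] with n hn
  exact ((admissible_orbit hr n).belowTail.lt_term_one hn).le

end Orbit

theorem exists_hasSum_term (a : ℕ) {r : ℝ} (hr : 0 < r) :
    ∃ g : ℕ → ℕ, (∀ n, 1 ≤ g n) ∧ Tendsto g atTop atTop ∧
      HasSum (fun n => term (a + n) (g n)) r := by
  have hlevel : ∀ n, level a r n ≤ exponent a r n := fun n =>
    le_choice (admissible_orbit hr n).pos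
  refine ⟨exponent a r, fun n => ?_, tendsto_atTop_mono hlevel (tendsto_level hr), ?_⟩
  · exact (Nat.one_le_iff_ne_zero.mpr (admissible_orbit hr n).level_ne_zero).trans (hlevel n)
  · rw [hasSum_iff_tendsto_nat_of_nonneg (fun n => (term_pos _ _).le)]
    simp_rw [sum_range_term_exponent]
    simpa using (tendsto_remainder hr).const_sub r

end ErdosGraham

/-- For every positive rational `q` there is a sequence of positive integers `f` with
`f(n) → ∞` such that `∑_{n=1}^∞ 1/((n+1)(n+2)⋯(n+f(n))) = q`. -/
theorem stmt1 (q : ℚ) (hq : 0 < q) :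
    ∃ f : ℕ → ℕ, (∀ n, 1 ≤ f n) ∧ Tendsto f atTop atTop ∧
      HasSum (fun n : ℕ =>
        (1 : ℝ) / ((∏ i ∈ Finset.Icc 1 (f (n + 1)), (n + 1 + i) : ℕ) : ℝ)) (q : ℝ) := by
  obtain ⟨g, hg_pos, hg_lim, hg_sum⟩ := ErdosGraham.exists_hasSum_term 1 (Rat.cast_pos.mpr hq)
  refine ⟨fun n => g (n - 1), fun n => hg_pos _, hg_lim.comp (tendsto_sub_atTop_nat 1), ?_⟩
  simpa only [Nat.add_sub_cancel, ErdosGraham.prod_Icc_add_eq_ascFactorial, ErdosGraham.term,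
    add_comm 1] using hg_sum
end

section
/- The set of all values of the series ∑_{n=1}^∞ 1/∏_{i=1}^{f(n)} (n+i), as (f(n))_{n=1}^∞ ranges over all (weakly) increasing sequences of positive integers with lim_{n→∞} f(n) = ∞, has Lebesgue measure zero (as a subset of ℝ). -/
/-!
Fix `m`, a position `R` and `k > m`, and look at the sums with `f (R + 1) = k + 1`. Their first
`R` terms are determined by the weakly increasing values `f 1 ≤ ⋯ ≤ f R` in `[1, k + 1]`, which
take at most `(R + k).choose R` values, while by telescoping the tail lies in an interval of
length `∑_{n > R} n! / (n + k + 1)! = (R + 1)! / (k (R + k + 1)!)`. So these sums lie in a union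
of intervals of total length at most `1 / k!`. The sets of sums with `f (R + 1) > m + 1` increase
with `R` and exhaust the sums with `f → ∞`, so the latter set has measure at most
`∑_{k > m} 1 / k!`, for every `m`.
-/

open Filter MeasureTheory Finset
open scoped Nat ENNReal Topology

namespace RisingProductSeries

noncomputable def factorialRatio (m k : ℕ) : ℝ := (m ! : ℝ) / (m + k)!

lemma factorialRatio_nonneg (m k : ℕ) : 0 ≤ factorialRatio m k := by
  unfold factorialRatio
  positivity

lemma factorialRatio_antitone (m : ℕ) : Antitone (factorialRatio m) := fun _ _ hkk' ↦
  div_le_div_of_nonneg_left (by positivity) (by positivity)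
    (by exact_mod_cast Nat.factorial_le (by omega))

lemma one_div_prod_Icc_add (m k : ℕ) :
    (1 : ℝ) / ((∏ i ∈ Icc 1 k, (m + i) : ℕ) : ℝ) = factorialRatio m k := by
  have hprod : ∏ i ∈ Icc 1 k, (m + i) = (m + 1).ascFactorial k := by
    rw [Nat.ascFactorial_eq_prod_range, ← Ico_add_one_right_eq_Icc, prod_Ico_eq_prod_range]
    exact prod_congr rfl fun i _ ↦ by ring
  have hfac : (m ! : ℝ) * (m + 1).ascFactorial k = (m + k)! := by
    exact_mod_cast Nat.factorial_mul_ascFactorial m k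
  rw [hprod, factorialRatio, ← hfac]
  field_simp

lemma factorialRatio_le_one_div (m : ℕ) {k : ℕ} (hk : 0 < k) :
    factorialRatio m k ≤ 1 / (m + 1) := by
  calc factorialRatio m k ≤ factorialRatio m 1 := factorialRatio_antitone m hk
    _ = 1 / (m + 1) := by
      rw [factorialRatio, Nat.factorial_succ]
      push_cast
      field_simp

lemma factorialRatio_sub_succ (m k : ℕ) :
    factorialRatio m k - factorialRatio (m + 1) k = k * factorialRatio m (k + 1) := by
  simp only [factorialRatio, show m + 1 + k = m + k + 1 by ring, ← add_assoc,
    Nat.factorial_succ]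
  push_cast
  field_simp
  ring

lemma hasSum_factorialRatio_succ (a : ℕ) {k : ℕ} (hk : 0 < k) :
    HasSum (fun n ↦ factorialRatio (n + a) (k + 1)) (factorialRatio a k / k) := by
  set b : ℕ → ℝ := fun n ↦ factorialRatio (n + a) k
  have hstep : ∀ n, b n - b (n + 1) = k * factorialRatio (n + a) (k + 1) := fun n ↦ by
    simp only [b, add_right_comm n 1 a, factorialRatio_sub_succ]
  have hb : Tendsto b atTop (𝓝 0) :=
    squeeze_zero (fun n ↦ factorialRatio_nonneg _ _)
      (fun n ↦ (factorialRatio_le_one_div (n + a) hk).trans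
        (one_div_le_one_div_of_le (by positivity) (by simp)))
      tendsto_one_div_add_atTop_nhds_zero_nat
  have hdiff : HasSum (fun n ↦ b n - b (n + 1)) (b 0) := by
    have hnonneg : ∀ n, 0 ≤ b n - b (n + 1) := fun n ↦ by
      rw [hstep]
      exact mul_nonneg (Nat.cast_nonneg k) (factorialRatio_nonneg _ _)
    rw [hasSum_iff_tendsto_nat_of_nonneg hnonneg]
    simp_rw [sum_range_sub']
    simpa using tendsto_const_nhds.sub hb
  simp_rw [hstep] at hdiff
  simpa [b, hk.ne'] using hdiff.div_const (k : ℝ)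

/-- Stars and bars: `q ↦ {q i + i}` embeds monotone maps into `R`-subsets of `[a, b + R)`. -/
lemma card_filter_monotone_piFinset_Icc_le (R a b : ℕ) :
    #{q ∈ Fintype.piFinset fun _ : Fin R ↦ Icc a b | Monotone q} ≤ (b + R - a).choose R := by
  set shift : (Fin R → ℕ) → Finset ℕ := fun q ↦ univ.image fun i ↦ q i + i
  have hstrict : ∀ q : Fin R → ℕ, Monotone q → StrictMono fun i ↦ q i + (i : ℕ) :=
    fun q hq i j hij ↦ Nat.add_lt_add_of_le_of_lt (hq hij.le) hij
  have hrange : ∀ q, (shift q : Set ℕ) = Set.range fun i ↦ q i + (i : ℕ) := fun q ↦ by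
    simp [shift]
  rw [← Nat.card_Ico a (b + R), ← card_powersetCard]
  refine card_le_card_of_injOn shift (fun q hq ↦ ?_) (fun q hq q' hq' hqq' ↦ ?_)
  · rw [mem_coe, mem_filter, Fintype.mem_piFinset] at hq
    refine mem_powersetCard.2 ⟨fun y hy ↦ ?_, ?_⟩
    · obtain ⟨i, -, rfl⟩ := mem_image.1 hy
      have := mem_Icc.1 (hq.1 i)
      simp only [mem_Ico]
      omega
    · rw [card_image_of_injective _ (hstrict q hq.2).injective, card_univ, Fintype.card_fin]
  · rw [mem_coe, mem_filter] at hq hq'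
    have h := congrArg ((↑) : Finset ℕ → Set ℕ) hqq'
    rw [hrange, hrange, (hstrict q hq.2).range_inj (hstrict q' hq'.2)] at h
    funext i
    simpa using congrFun h i

lemma choose_mul_factorialRatio_le (R k : ℕ) :
    ((R + k).choose R : ℝ) * factorialRatio (R + 1) k ≤ 1 / k ! := by
  have hnat : (R + k).choose R * (R + 1)! * k ! ≤ (R + 1 + k)! := by
    have h := Nat.add_choose_mul_factorial_mul_factorial k R
    rw [add_comm k R] at h
    calc (R + k).choose R * (R + 1)! * k ! = (R + 1) * (R + k)! := by
          rw [← h, Nat.factorial_succ]; ring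
      _ ≤ (R + k + 1) * (R + k)! := Nat.mul_le_mul_right _ (by omega)
      _ = (R + 1 + k)! := by rw [← Nat.factorial_succ]; ring_nf
  rw [factorialRatio, mul_div_assoc', div_le_div_iff₀ (by positivity) (by positivity), one_mul]
  exact_mod_cast hnat

lemma hasSum_mem_Icc_partialSum {g : ℕ → ℕ} (hg : Monotone g) {R k : ℕ} (hk : 0 < k)
    (hR : g R = k + 1) {x : ℝ} (hx : HasSum (fun n ↦ factorialRatio (n + 1) (g n)) x) :
    x ∈ Set.Icc (∑ i ∈ range R, factorialRatio (i + 1) (g i))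
      (∑ i ∈ range R, factorialRatio (i + 1) (g i) + factorialRatio (R + 1) k / k) := by
  have htail := (hasSum_nat_add_iff' R).2 hx
  have hle : x - ∑ i ∈ range R, factorialRatio (i + 1) (g i) ≤ factorialRatio (R + 1) k / k :=
    hasSum_le (fun n ↦ hR ▸ factorialRatio_antitone _ (hg (Nat.le_add_left R n))) htail
      (hasSum_factorialRatio_succ (R + 1) hk)
  have hnonneg := htail.nonneg fun n ↦ factorialRatio_nonneg _ _
  constructor <;> linarith

/-- `g n` plays the role of `f (n + 1)`. -/
def seriesValues (P : (ℕ → ℕ) → Prop) : Set ℝ :=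
  {x | ∃ g : ℕ → ℕ, (∀ n, 1 ≤ g n) ∧ Monotone g ∧ P g ∧
    HasSum (fun n ↦ factorialRatio (n + 1) (g n)) x}

lemma seriesValues_mono {P Q : (ℕ → ℕ) → Prop} (h : ∀ g, Monotone g → P g → Q g) :
    seriesValues P ⊆ seriesValues Q := by
  rintro x ⟨g, hg1, hg, hP, hx⟩
  exact ⟨g, hg1, hg, h g hg hP, hx⟩

lemma volume_seriesValues_apply_eq_le (R : ℕ) {k : ℕ} (hk : 0 < k) :
    volume (seriesValues fun g ↦ g R = k + 1) ≤ ENNReal.ofReal (1 / k !) := by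
  set A := {q ∈ Fintype.piFinset fun _ : Fin R ↦ Icc 1 (k + 1) | Monotone q}
  set left : (Fin R → ℕ) → ℝ := fun q ↦ ∑ i : Fin R, factorialRatio (i + 1) (q i)
  set L := factorialRatio (R + 1) k / k
  have hcover : (seriesValues fun g ↦ g R = k + 1) ⊆ ⋃ q ∈ A, Set.Icc (left q) (left q + L) := by
    rintro x ⟨g, hg1, hg, hR, hx⟩
    refine Set.mem_biUnion (x := fun i : Fin R ↦ g i) ?_ ?_
    · refine mem_filter.2 ⟨Fintype.mem_piFinset.2 fun i ↦ mem_Icc.2 ⟨hg1 i, ?_⟩, ?_⟩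
      · exact hR ▸ hg i.isLt.le
      · exact fun i j hij ↦ hg hij
    · simpa only [left, Fin.sum_univ_eq_sum_range (fun i ↦ factorialRatio (i + 1) (g i))]
        using hasSum_mem_Icc_partialSum hg hk hR hx
  have hL : L ≤ factorialRatio (R + 1) k :=
    div_le_self (factorialRatio_nonneg _ _) (by exact_mod_cast hk)
  calc volume (seriesValues fun g ↦ g R = k + 1)
      ≤ ∑ q ∈ A, volume (Set.Icc (left q) (left q + L)) :=
        (measure_mono hcover).trans (measure_biUnion_finset_le A _)
    _ = #A * ENNReal.ofReal L := by simp [Real.volume_Icc]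
    _ ≤ ((R + k).choose R : ℕ) * ENNReal.ofReal L := by
        gcongr
        simpa [add_comm] using card_filter_monotone_piFinset_Icc_le R 1 (k + 1)
    _ = ENNReal.ofReal ((R + k).choose R * L) := by
        rw [ENNReal.ofReal_mul (by positivity), ENNReal.ofReal_natCast]
    _ ≤ ENNReal.ofReal (1 / k !) := ENNReal.ofReal_le_ofReal <|
        (mul_le_mul_of_nonneg_left hL (by positivity)).trans (choose_mul_factorialRatio_le R k)

lemma volume_seriesValues_lt_apply_le (m R : ℕ) :
    volume (seriesValues fun g ↦ m + 1 < g R) ≤ ∑' k, ENNReal.ofReal (1 / (k + m + 1)!) := by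
  have hcover : (seriesValues fun g ↦ m + 1 < g R) ⊆
      ⋃ k, seriesValues fun g ↦ g R = k + m + 1 + 1 := by
    rintro x ⟨g, hg1, hg, hR, hx⟩
    exact Set.mem_iUnion.2 ⟨g R - (m + 2), g, hg1, hg, by omega, hx⟩
  exact (measure_mono hcover).trans <| (measure_iUnion_le _).trans <|
    ENNReal.tsum_le_tsum fun k ↦ volume_seriesValues_apply_eq_le R (by omega)

lemma volume_seriesValues_tendsto_atTop :
    volume (seriesValues fun g ↦ Tendsto g atTop atTop) = 0 := by
  have hbound (m : ℕ) : volume (seriesValues fun g ↦ Tendsto g atTop atTop) ≤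
      ∑' k, ENNReal.ofReal (1 / (k + m + 1)!) := by
    have hcover : (seriesValues fun g ↦ Tendsto g atTop atTop) ⊆
        ⋃ R, seriesValues fun g ↦ m + 1 < g R := by
      rintro x ⟨g, hg1, hg, hlim, hx⟩
      obtain ⟨R, hR⟩ := (tendsto_atTop.1 hlim (m + 2)).exists
      exact Set.mem_iUnion.2 ⟨R, g, hg1, hg, hR, hx⟩
    have hmono : Monotone fun R ↦ seriesValues fun g ↦ m + 1 < g R :=
      fun R R' hRR' ↦ seriesValues_mono fun g hg hR ↦ hR.trans_le (hg hRR')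
    calc volume (seriesValues fun g ↦ Tendsto g atTop atTop)
        ≤ ⨆ R, volume (seriesValues fun g ↦ m + 1 < g R) :=
          (measure_mono hcover).trans_eq hmono.measure_iUnion
      _ ≤ _ := iSup_le (volume_seriesValues_lt_apply_le m)
  set e : ℕ → ℝ≥0∞ := fun k ↦ ENNReal.ofReal (1 / k !)
  have he : ∑' k, e k ≠ ⊤ := by
    rw [← ENNReal.ofReal_tsum_of_nonneg (fun k ↦ by positivity)
      (by simpa using Real.summable_pow_div_factorial 1)]
    exact ENNReal.ofReal_ne_top
  have htail : Tendsto (fun m ↦ ∑' k, ENNReal.ofReal (1 / (k + m + 1)!)) atTop (𝓝 0) :=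
    ((ENNReal.tendsto_sum_nat_add e he).comp (tendsto_add_atTop_nat 1)).congr fun m ↦ by
      simp only [Function.comp_apply, e, add_assoc]
  exact nonpos_iff_eq_zero.1 (ge_of_tendsto' htail hbound)

end RisingProductSeries

/-- The set of all sums `∑_{n=1}^∞ 1/((n+1)(n+2)⋯(n+f(n)))`, as `f` ranges over all weakly
increasing sequences of positive integers tending to infinity, has Lebesgue measure zero. -/
theorem stmt2 :
    MeasureTheory.volume
      {x : ℝ | ∃ f : ℕ → ℕ, (∀ n, 1 ≤ f n) ∧ Monotone f ∧ Tendsto f atTop atTop ∧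
        HasSum (fun n : ℕ =>
          (1 : ℝ) / ((∏ i ∈ Finset.Icc 1 (f (n + 1)), (n + 1 + i) : ℕ) : ℝ)) x}
      = 0 := by
  refine measure_mono_null ?_ RisingProductSeries.volume_seriesValues_tendsto_atTop
  rintro x ⟨f, hf1, hf, hlim, hx⟩
  refine ⟨fun n ↦ f (n + 1), fun n ↦ hf1 _, fun a b hab ↦ hf (by omega),
    hlim.comp (tendsto_add_atTop_nat 1), ?_⟩
  simpa only [RisingProductSeries.one_div_prod_Icc_add] using hx
end

section
/- The set of all values of the series ∑_{n=1}^∞ 1/∏_{i=1}^{f(n)} (n+i), as (f(n))_{n=1}^∞ ranges over all (weakly) increasing sequences of positive integers with lim_{n→∞} f(n) = ∞, has empty interior in ℝ. -/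
/-!
Write `a m k = 1 / ((m + 1) ⋯ (m + k))`. From `a m k - a (m + 1) k = k * a m (k + 1)` the series
`∑ₙ a (n + m) (k + 1)` telescopes to `a m k / k`. Hence, for `k ≥ 1` and monotone `h` with
`h 0 = k + 1`, the sum `∑ₙ a (n + m) (h n)` lies in `(a m (k + 1), a m k / k]`. These intervals
are disjoint, so sums over monotone sequences are ordered antilexicographically, and no such sum
equals `a m k` when `k ≥ 2`.

Given a value `x` of the series for `f`, adding `a (N + 2) (f (N + 1))` to the sum of its first
`N + 1` terms gives points tending to `x`. An admissible `f'` attaining such a point has its sum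
strictly between those of `f` continued after position `N` by the constants `f (N + 1) + 1` and
`f (N + 1)`. So `f'` agrees with `f` up to `N`, and its tail from `N + 1` would equal the
forbidden value `a (N + 2) (f (N + 1))`.
-/

open Filter Finset Topology

theorem prod_Icc_add_eq_ascFactorial (m k : ℕ) :
    ∏ i ∈ Icc 1 k, (m + i) = (m + 1).ascFactorial k := by
  induction k with
  | zero => simp
  | succ k ih => rw [prod_Icc_succ_top (by omega), ih, Nat.ascFactorial_succ]; ring

noncomputable def invAscProd (m k : ℕ) : ℝ := 1 / ((∏ i ∈ Icc 1 k, (m + i) : ℕ) : ℝ)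

theorem invAscProd_eq (m k : ℕ) : invAscProd m k = 1 / ((m + 1).ascFactorial k : ℝ) := by
  rw [invAscProd, prod_Icc_add_eq_ascFactorial]

theorem invAscProd_pos (m k : ℕ) : 0 < invAscProd m k := by
  rw [invAscProd_eq]
  exact one_div_pos.mpr (by exact_mod_cast Nat.ascFactorial_pos _ _)

theorem invAscProd_one (m : ℕ) : invAscProd m 1 = 1 / ((m : ℝ) + 1) := by
  simp [invAscProd]

theorem antitone_invAscProd (m : ℕ) : Antitone (invAscProd m) := by
  refine antitone_nat_of_succ_le fun k => ?_
  rw [invAscProd_eq, invAscProd_eq, Nat.ascFactorial_succ, Nat.cast_mul]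
  have hpos : (0 : ℝ) < (m + 1).ascFactorial k := by exact_mod_cast Nat.ascFactorial_pos _ _
  exact one_div_le_one_div_of_le hpos (le_mul_of_one_le_left hpos.le (by norm_cast; omega))

theorem invAscProd_sub_invAscProd_succ (m k : ℕ) :
    invAscProd m k - invAscProd (m + 1) k = k * invAscProd m (k + 1) := by
  have hshift : ((m + 1 : ℕ) : ℝ) * (m + 1 + 1).ascFactorial k =
      (m + 1 + k : ℕ) * (m + 1).ascFactorial k := by
    exact_mod_cast Nat.succ_ascFactorial (m + 1) k
  have hA : (0 : ℝ) < (m + 1).ascFactorial k := by exact_mod_cast Nat.ascFactorial_pos _ _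
  have hB : (0 : ℝ) < (m + 1 + 1).ascFactorial k := by exact_mod_cast Nat.ascFactorial_pos _ _
  rw [invAscProd_eq, invAscProd_eq, invAscProd_eq, Nat.ascFactorial_succ]
  push_cast at hshift ⊢
  field_simp
  linear_combination hshift

theorem tendsto_invAscProd_atTop (m : ℕ) {k : ℕ} (hk : 1 ≤ k) :
    Tendsto (fun n => invAscProd (n + m) k) atTop (𝓝 0) := by
  refine squeeze_zero (fun n => (invAscProd_pos _ _).le)
    (fun n => (antitone_invAscProd _ hk).trans_eq (invAscProd_one _)) ?_
  have := (tendsto_add_atTop_iff_nat m).mpr (tendsto_one_div_add_atTop_nhds_zero_nat (𝕜 := ℝ))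
  simpa using this

theorem hasSum_invAscProd_succ (m : ℕ) {k : ℕ} (hk : 1 ≤ k) :
    HasSum (fun n => invAscProd (n + m) (k + 1)) (invAscProd m k / k) := by
  have hk' : (k : ℝ) ≠ 0 := by positivity
  have hterm : ∀ n, invAscProd (n + m) (k + 1) =
      invAscProd (n + m) k / k - invAscProd (n + 1 + m) k / k := fun n => by
    rw [Nat.add_right_comm, ← sub_div, invAscProd_sub_invAscProd_succ]
    field_simp
  rw [hasSum_iff_tendsto_nat_of_nonneg (fun n => (invAscProd_pos _ _).le)]
  simp_rw [hterm, sum_range_sub' (fun n => invAscProd (n + m) k / k)]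
  simpa using ((tendsto_invAscProd_atTop m hk).div_const (k : ℝ)).const_sub (invAscProd m k / k)

section Tails

variable {h : ℕ → ℕ} {m : ℕ} {s : ℝ}

theorem hasSum_invAscProd_tail_iff (N : ℕ) :
    HasSum (fun n => invAscProd (n + (N + m)) (h (n + N)))
        (s - ∑ i ∈ range N, invAscProd (i + m) (h i)) ↔
      HasSum (fun n => invAscProd (n + m) (h n)) s := by
  simpa only [add_assoc] using
    hasSum_nat_add_iff' (f := fun n => invAscProd (n + m) (h n)) (g := s) N

theorem invAscProd_lt_of_hasSum (hs : HasSum (fun n => invAscProd (n + m) (h n)) s) :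
    invAscProd m (h 0) < s := by
  have htail := (hasSum_invAscProd_tail_iff 1).mpr hs
  have hpos :=
    hasSum_lt (i := 0) (fun _ => (invAscProd_pos _ _).le) (invAscProd_pos _ _) hasSum_zero htail
  simp only [range_one, sum_singleton, zero_add] at hpos
  linarith

theorem le_of_hasSum_invAscProd (hh : Monotone h) {k : ℕ} (hk : 1 ≤ k) (hk0 : k + 1 ≤ h 0)
    (hs : HasSum (fun n => invAscProd (n + m) (h n)) s) : s ≤ invAscProd m k / k :=
  hasSum_le (fun n => antitone_invAscProd _ (hk0.trans (hh (Nat.zero_le n))))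
    hs (hasSum_invAscProd_succ m hk)

theorem hasSum_invAscProd_ne (hh : Monotone h) {k : ℕ} (hk : 2 ≤ k)
    (hs : HasSum (fun n => invAscProd (n + m) (h n)) s) : s ≠ invAscProd m k := by
  rcases le_or_gt (h 0) k with hle | hlt
  · exact ((antitone_invAscProd m hle).trans_lt (invAscProd_lt_of_hasSum hs)).ne'
  · refine ((le_of_hasSum_invAscProd hh (by omega) hlt hs).trans_lt ?_).ne
    exact div_lt_self (invAscProd_pos _ _) (by norm_cast)

end Tails

theorem lt_of_hasSum_invAscProd_of_lex {g g' : ℕ → ℕ} {m p : ℕ} {s s' : ℝ} (hg' : Monotone g')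
    (hgp : 1 ≤ g p) (heq : ∀ i < p, g i = g' i) (hlt : g p < g' p)
    (hs : HasSum (fun n => invAscProd (n + m) (g n)) s)
    (hs' : HasSum (fun n => invAscProd (n + m) (g' n)) s') : s' < s := by
  induction p generalizing m g g' s s' with
  | zero =>
    calc s' ≤ invAscProd m (g 0) / g 0 := le_of_hasSum_invAscProd hg' hgp hlt hs'
      _ ≤ invAscProd m (g 0) := div_le_self (invAscProd_pos _ _).le (by exact_mod_cast hgp)
      _ < s := invAscProd_lt_of_hasSum hs
  | succ p ih =>
    have h0 : g 0 = g' 0 := heq 0 p.succ_pos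
    have := ih (g := fun n => g (n + 1)) (g' := fun n => g' (n + 1))
      (hg'.comp fun _ _ hab => Nat.succ_le_succ hab) hgp (fun i hi => heq (i + 1) (by omega)) hlt
      ((hasSum_invAscProd_tail_iff 1).mpr hs) ((hasSum_invAscProd_tail_iff 1).mpr hs')
    simp only [range_one, sum_singleton, zero_add, h0] at this
    linarith

theorem eq_of_hasSum_invAscProd_between {g₁ g₂ g' : ℕ → ℕ} {m N : ℕ} {s₁ s₂ s' : ℝ}
    (hg₂ : Monotone g₂) (hg' : Monotone g') (hg₁_pos : ∀ n, 1 ≤ g₁ n) (hg'_pos : ∀ n, 1 ≤ g' n)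
    (h₁₂ : ∀ n ≤ N, g₁ n = g₂ n)
    (hs₁ : HasSum (fun n => invAscProd (n + m) (g₁ n)) s₁)
    (hs₂ : HasSum (fun n => invAscProd (n + m) (g₂ n)) s₂)
    (hs' : HasSum (fun n => invAscProd (n + m) (g' n)) s') (h₁ : s₁ < s') (h₂ : s' < s₂) :
    ∀ n ≤ N, g' n = g₁ n := by
  intro n
  induction n using Nat.strong_induction_on with
  | _ n ih =>
    intro hn
    rcases lt_trichotomy (g' n) (g₁ n) with hlt | heq | hgt
    · refine absurd (lt_of_hasSum_invAscProd_of_lex hg₂ (hg'_pos n) (fun i hi => ?_)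
        (h₁₂ n hn ▸ hlt) hs' hs₂) h₂.not_gt
      rw [ih i hi (by omega), h₁₂ i (by omega)]
    · exact heq
    · exact absurd (lt_of_hasSum_invAscProd_of_lex hg' (hg₁_pos n)
        (fun i hi => (ih i hi (by omega)).symm) hgt hs₁ hs') h₁.not_gt

def freezeAfter (g : ℕ → ℕ) (N c : ℕ) (n : ℕ) : ℕ := if n ≤ N then g n else c

section FreezeAfter

variable {g : ℕ → ℕ} {N c : ℕ}

theorem freezeAfter_of_le {n : ℕ} (hn : n ≤ N) : freezeAfter g N c n = g n := if_pos hn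

theorem monotone_freezeAfter (hg : Monotone g) (hc : g N ≤ c) : Monotone (freezeAfter g N c) := by
  intro a b hab
  unfold freezeAfter
  split_ifs with ha hb hb
  · exact hg hab
  · exact (hg ha).trans hc
  · omega
  · exact le_rfl

theorem one_le_freezeAfter (hg : ∀ n, 1 ≤ g n) (hc : 1 ≤ c) (n : ℕ) : 1 ≤ freezeAfter g N c n := by
  unfold freezeAfter
  split_ifs
  exacts [hg n, hc]

theorem hasSum_invAscProd_freezeAfter {m : ℕ} {t : ℝ}
    (ht : HasSum (fun n => invAscProd (n + (N + 1 + m)) c) t) :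
    HasSum (fun n => invAscProd (n + m) (freezeAfter g N c n))
      (∑ i ∈ range (N + 1), invAscProd (i + m) (g i) + t) := by
  refine (hasSum_invAscProd_tail_iff (N + 1)).mp ?_
  have hprefix : ∑ i ∈ range (N + 1), invAscProd (i + m) (freezeAfter g N c i) =
      ∑ i ∈ range (N + 1), invAscProd (i + m) (g i) :=
    sum_congr rfl fun i hi => by rw [freezeAfter_of_le (Nat.lt_succ_iff.mp (mem_range.mp hi))]
  have htail : ∀ n, freezeAfter g N c (n + (N + 1)) = c := fun n => if_neg (by omega)
  simpa only [hprefix, htail, add_sub_cancel_left] using ht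

end FreezeAfter

noncomputable def gapPoint (g : ℕ → ℕ) (m N : ℕ) : ℝ :=
  ∑ i ∈ range (N + 1), invAscProd (i + m) (g i) + invAscProd (N + 1 + m) (g N)

theorem not_hasSum_invAscProd_gapPoint {g g' : ℕ → ℕ} {m N : ℕ} (hg : Monotone g)
    (hg_pos : ∀ n, 1 ≤ g n) (hN : 2 ≤ g N) (hg' : Monotone g') (hg'_pos : ∀ n, 1 ≤ g' n) :
    ¬ HasSum (fun n => invAscProd (n + m) (g' n)) (gapPoint g m N) := by
  intro hs
  obtain ⟨j, hj⟩ : ∃ j, g N = j + 1 := ⟨g N - 1, by omega⟩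
  set M := N + 1 + m
  have hT₀ := hasSum_invAscProd_succ M (k := j) (by omega)
  have hT₁ := hasSum_invAscProd_succ M (k := j + 1) (by omega)
  have hlt₀ : invAscProd M (j + 1) < invAscProd M j / j :=
    invAscProd_lt_of_hasSum (h := fun _ => j + 1) hT₀
  have hlt₁ : invAscProd M (j + 1) / (j + 1 : ℕ) < invAscProd M (j + 1) :=
    div_lt_self (invAscProd_pos _ _) (by norm_cast; omega)
  have hagree := eq_of_hasSum_invAscProd_between
    (monotone_freezeAfter hg (by omega)) hg' (one_le_freezeAfter hg_pos (by omega)) hg'_pos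
    (fun n hn => by rw [freezeAfter_of_le hn, freezeAfter_of_le hn])
    (hasSum_invAscProd_freezeAfter hT₁) (hasSum_invAscProd_freezeAfter hT₀) hs
    (by rw [gapPoint, hj]; linarith) (by rw [gapPoint, hj]; linarith)
  have hprefix : ∑ i ∈ range (N + 1), invAscProd (i + m) (g' i) =
      ∑ i ∈ range (N + 1), invAscProd (i + m) (g i) :=
    sum_congr rfl fun i hi => by
      have hi := Nat.lt_succ_iff.mp (mem_range.mp hi)
      rw [hagree i hi, freezeAfter_of_le hi]
  have htail := (hasSum_invAscProd_tail_iff (N + 1)).mpr hs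
  rw [gapPoint, hprefix, add_sub_cancel_left] at htail
  exact hasSum_invAscProd_ne (hg'.comp fun _ _ hab => by omega) (by omega) htail rfl

theorem tendsto_gapPoint {g : ℕ → ℕ} {m : ℕ} {s : ℝ} (hg_pos : ∀ n, 1 ≤ g n)
    (hs : HasSum (fun n => invAscProd (n + m) (g n)) s) :
    Tendsto (gapPoint g m) atTop (𝓝 s) := by
  have hlast : Tendsto (fun N => invAscProd (N + 1 + m) (g N)) atTop (𝓝 0) :=
    squeeze_zero (fun N => (invAscProd_pos _ _).le) (fun N => antitone_invAscProd _ (hg_pos N))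
      (by simpa only [add_assoc] using tendsto_invAscProd_atTop (1 + m) le_rfl)
  have hsum := ((tendsto_add_atTop_iff_nat 1).mpr hs.tendsto_sum_nat).add hlast
  rw [add_zero] at hsum
  exact hsum

/-- The set of all sums `∑_{n=1}^∞ 1/((n+1)(n+2)⋯(n+f(n)))`, as `f` ranges over all weakly
increasing sequences of positive integers tending to infinity, has empty interior in `ℝ`. -/
theorem stmt3 :
    interior
      {x : ℝ | ∃ f : ℕ → ℕ, (∀ n, 1 ≤ f n) ∧ Monotone f ∧ Tendsto f atTop atTop ∧
        HasSum (fun n : ℕ =>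
          (1 : ℝ) / ((∏ i ∈ Finset.Icc 1 (f (n + 1)), (n + 1 + i) : ℕ) : ℝ)) x}
      = ∅ := by
  refine Set.eq_empty_iff_forall_notMem.mpr fun x hx => ?_
  obtain ⟨f, hf_pos, hf, hf_top, hs⟩ := interior_subset hx
  have hf_succ : Monotone fun n => f (n + 1) := hf.comp fun _ _ hab => by omega
  have hgap : ∀ᶠ N in atTop, 2 ≤ f (N + 1) :=
    (tendsto_add_atTop_iff_nat 1).mpr hf_top |>.eventually_ge_atTop 2
  obtain ⟨N, hN_mem, hN⟩ :=
    ((tendsto_gapPoint (fun n => hf_pos (n + 1)) hs).eventually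
      (isOpen_interior.mem_nhds hx)).and hgap |>.exists
  obtain ⟨f', hf'_pos, hf', -, hs'⟩ := interior_subset hN_mem
  exact not_hasSum_invAscProd_gapPoint hf_succ (fun n => hf_pos _) hN
    (hf'.comp fun _ _ hab => by omega) (fun n => hf'_pos _) hs'
end

section
/- (Kakeya, part (a), eventual form) Let (x_n)_{n=1}^∞ be a sequence of strictly positive real numbers such that ∑_n x_n converges and such that ∑_{k=n+1}^∞ x_k ≥ x_n holds for every sufficiently large n ∈ ℕ. Then the achievement set { ∑_{n=1}^∞ ε_n x_n : ε_n ∈ {0,1} for every n } is a finite union of nondegenerate bounded closed intervals of ℝ. -/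
/-!
Kakeya's theorem: if every term of a convergent nonnegative series is at most the sum of the
terms after it, the greedy algorithm (take `x n` whenever it still fits under the remaining
target) realises every `t ∈ [0, ∑ x]` as a subsum, because the remaining target never exceeds
the remaining tail. If this holds only from the index `N` on, splitting a subsum into its
part below `N` and its part from `N` on writes the achievement set as the union, over the
`2 ^ N` finite sets `F ⊆ {0, …, N-1}`, of the translates `∑ F x + [0, σ]`, where `σ > 0` is
the sum of the tail.
-/

open Filter Finset Topology

def achievementSet (x : ℕ → ℝ) : Set ℝ :=
  {y | ∃ T : Set ℕ, HasSum (Set.indicator T x) y}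

lemma achievementSet_subset_Icc {x : ℕ → ℝ} (hx : 0 ≤ x) (hsum : Summable x) :
    achievementSet x ⊆ Set.Icc 0 (∑' n, x n) := by
  rintro y ⟨T, hT⟩
  rw [← hT.tsum_eq]
  exact ⟨tsum_nonneg fun n => Set.indicator_nonneg (fun n _ => hx n) n,
    (hsum.indicator T).tsum_le_tsum (fun n => Set.indicator_le_self' (fun n _ => hx n) n) hsum⟩

lemma tsum_add_left_eq_add_tsum {x : ℕ → ℝ} (hsum : Summable x) (n : ℕ) :
    ∑' k, x (n + k) = x n + ∑' k, x (n + 1 + k) := by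
  have hs : Summable fun k => x (n + k) :=
    ((summable_nat_add_iff n).mpr hsum).congr fun k => by rw [add_comm]
  rw [hs.tsum_eq_zero_add, add_zero]
  exact congrArg _ (tsum_congr fun k => by rw [add_assoc, add_comm 1 k])

section Greedy

variable (x : ℕ → ℝ) (t : ℝ)

/-- What is left of the target `t` after the greedy algorithm has examined `x 0, …, x (n-1)`. -/
noncomputable def greedyRemainder : ℕ → ℝ
  | 0 => t
  | n + 1 => if x n ≤ greedyRemainder n then greedyRemainder n - x n else greedyRemainder n

def greedySet : Set ℕ :=
  {n | x n ≤ greedyRemainder x t n}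

variable {x t}

lemma greedyRemainder_nonneg (ht : 0 ≤ t) (n : ℕ) : 0 ≤ greedyRemainder x t n := by
  induction n with
  | zero => exact ht
  | succ n ih =>
    rw [greedyRemainder]
    split_ifs with h
    · linarith
    · exact ih

lemma greedyRemainder_le_tsum (hsum : Summable x) (hcond : ∀ n, x n ≤ ∑' k, x (n + 1 + k))
    (ht : t ≤ ∑' n, x n) (n : ℕ) : greedyRemainder x t n ≤ ∑' k, x (n + k) := by
  induction n with
  | zero => simpa [greedyRemainder] using ht
  | succ n ih =>
    rw [greedyRemainder]
    have := tsum_add_left_eq_add_tsum hsum n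
    split_ifs with h
    · linarith
    · linarith [hcond n]

lemma sum_range_indicator_greedySet (n : ℕ) :
    ∑ k ∈ range n, (greedySet x t).indicator x k = t - greedyRemainder x t n := by
  induction n with
  | zero => simp [greedyRemainder]
  | succ n ih =>
    rw [sum_range_succ, ih, greedyRemainder]
    by_cases h : x n ≤ greedyRemainder x t n
    · rw [Set.indicator_of_mem (show n ∈ greedySet x t from h), if_pos h]; ring
    · rw [Set.indicator_of_notMem (show n ∉ greedySet x t from h), if_neg h]; ring

lemma hasSum_indicator_greedySet (hsum : Summable x) (hcond : ∀ n, x n ≤ ∑' k, x (n + 1 + k))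
    (ht₀ : 0 ≤ t) (ht : t ≤ ∑' n, x n) : HasSum ((greedySet x t).indicator x) t := by
  have htail : Tendsto (fun n => ∑' k, x (n + k)) atTop (𝓝 0) := by
    simpa only [add_comm] using tendsto_sum_nat_add x
  have hrem : Tendsto (greedyRemainder x t) atTop (𝓝 0) :=
    squeeze_zero (greedyRemainder_nonneg ht₀) (greedyRemainder_le_tsum hsum hcond ht) htail
  rw [(hsum.indicator _).hasSum_iff_tendsto_nat]
  simpa [sum_range_indicator_greedySet] using (tendsto_const_nhds (x := t)).sub hrem

end Greedy

theorem achievementSet_eq_Icc_of_le_tsum {x : ℕ → ℝ} (hx : 0 ≤ x) (hsum : Summable x)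
    (hcond : ∀ n, x n ≤ ∑' k, x (n + 1 + k)) :
    achievementSet x = Set.Icc 0 (∑' n, x n) :=
  (achievementSet_subset_Icc hx hsum).antisymm fun t ht =>
    ⟨greedySet x t, hasSum_indicator_greedySet hsum hcond ht.1 ht.2⟩

lemma hasSum_indicator_iff_nat_add (x : ℕ → ℝ) (T : Set ℕ) (N : ℕ) (y : ℝ) :
    HasSum (T.indicator x) y ↔ HasSum (((· + N) ⁻¹' T).indicator fun k => x (k + N))
      (y - ∑ n ∈ range N, T.indicator x n) := by
  rw [← hasSum_nat_add_iff' N]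
  simp only [← Set.indicator_comp_right (· + N)]
  rfl

theorem achievementSet_eq_biUnion_image (x : ℕ → ℝ) (N : ℕ) :
    achievementSet x = ⋃ F ∈ (range N).powerset,
      (fun z => ∑ n ∈ F, x n + z) '' achievementSet fun k => x (k + N) := by
  classical
  ext y
  simp only [Set.mem_iUnion, Set.mem_image, mem_powerset, exists_prop]
  constructor
  · rintro ⟨T, hT⟩
    rw [hasSum_indicator_iff_nat_add x T N, sum_indicator_eq_sum_filter] at hT
    exact ⟨_, filter_subset _ _, _, ⟨_, hT⟩, add_sub_cancel _ _⟩
  · rintro ⟨F, hF, z, ⟨S, hS⟩, rfl⟩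
    have hF' {n : ℕ} (hn : n ∈ F) : n < N := mem_range.mp (hF hn)
    have hpre : (· + N) ⁻¹' (↑F ∪ (· + N) '' S) = S := by
      ext k
      have : k + N ∉ F := fun hk => by simpa using hF' hk
      simp [this]
    have hhead : ∑ n ∈ range N, (↑F ∪ (· + N) '' S).indicator x n = ∑ n ∈ F, x n := by
      rw [← sum_indicator_subset x hF]
      refine sum_congr rfl fun n hn => ?_
      have : n ∉ (· + N) '' S := by rintro ⟨k, -, rfl⟩; simp at hn
      simp [Set.indicator_apply, this]
    refine ⟨↑F ∪ (· + N) '' S, ?_⟩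
    rwa [hasSum_indicator_iff_nat_add x _ N, hpre, hhead, add_sub_cancel_left]

/-- Kakeya, part (a), eventual form: if `x n` is positive, `∑ x n` converges, and eventually
each term is at most the sum of all subsequent terms, then the achievement set is a finite
union of nondegenerate bounded closed intervals. -/
theorem stmt4 (x : ℕ → ℝ) (hpos : ∀ n, 0 < x n) (hsum : Summable x)
    (hcond : ∀ᶠ n in atTop, x n ≤ ∑' k : ℕ, x (n + 1 + k)) :
    ∃ s : Finset (ℝ × ℝ), (∀ p ∈ s, p.1 < p.2) ∧
      {y : ℝ | ∃ T : Set ℕ, HasSum (Set.indicator T x) y} = ⋃ p ∈ s, Set.Icc p.1 p.2 := by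
  obtain ⟨N, hN⟩ := eventually_atTop.mp hcond
  have hsum' : Summable fun k => x (k + N) := (summable_nat_add_iff N).mpr hsum
  have hcond' (n : ℕ) : x (n + N) ≤ ∑' k, x (n + 1 + k + N) := by
    simpa only [add_right_comm _ N] using hN (n + N) (Nat.le_add_left N n)
  have htail := achievementSet_eq_Icc_of_le_tsum (fun k => (hpos _).le) hsum' hcond'
  set σ := ∑' k, x (k + N)
  have hσ : 0 < σ := hsum'.tsum_pos (fun k => (hpos _).le) 0 (hpos _)
  refine ⟨(range N).powerset.image fun F => (∑ n ∈ F, x n, ∑ n ∈ F, x n + σ), ?_, ?_⟩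
  · simp only [mem_image]
    rintro _ ⟨F, -, rfl⟩
    simpa using hσ
  · change achievementSet x = _
    simp only [achievementSet_eq_biUnion_image x N, htail, Set.image_const_add_Icc, add_zero,
      set_biUnion_finset_image]
end

section
/- (Kakeya, part (a), global form) Let (x_n)_{n=1}^∞ be a sequence of strictly positive real numbers such that ∑_n x_n converges and such that ∑_{k=n+1}^∞ x_k ≥ x_n holds for every n ∈ ℕ. Then the achievement set { ∑_{n=1}^∞ ε_n x_n : ε_n ∈ {0,1} for every n } is exactly the interval [0, ∑_{n=1}^∞ x_n]. -/
open Filter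

/-- Kakeya, part (a), global form: if `x n` is positive, `∑ x n` converges, and every term is
at most the sum of all subsequent terms, then the achievement set is `[0, ∑ x n]`. -/
theorem stmt5 (x : ℕ → ℝ) (hpos : ∀ n, 0 < x n) (hsum : Summable x)
    (hcond : ∀ n : ℕ, x n ≤ ∑' k : ℕ, x (n + 1 + k)) :
    {y : ℝ | ∃ T : Set ℕ, HasSum (Set.indicator T x) y} = Set.Icc 0 (∑' n, x n) := by
  ext y
  simp only [Set.mem_setOf_eq, Set.mem_Icc]
  constructor
  · rintro ⟨T, hT⟩
    have hind_nonneg : ∀ n, 0 ≤ Set.indicator T x n := fun n =>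
      Set.indicator_nonneg (fun i _ => (hpos i).le) n
    have hle : ∀ n, Set.indicator T x n ≤ x n := fun n =>
      Set.indicator_le_self' (fun i _ => (hpos i).le) n
    constructor
    · exact hT.nonneg hind_nonneg
    · rw [← hT.tsum_eq]
      exact Summable.tsum_le_tsum hle (hT.summable) hsum
  · rintro ⟨hy0, hyS⟩
    -- greedy construction
    set g : ℕ → ℝ := fun n =>
      Nat.rec 0 (fun n gn => if gn + x n ≤ y then gn + x n else gn) n with hg
    have hg0 : g 0 = 0 := rfl
    have hgsucc : ∀ n, g (n + 1) = if g n + x n ≤ y then g n + x n else g n := fun n => rfl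
    set T : Set ℕ := {n | g n + x n ≤ y} with hTdef
    -- tails
    set tail : ℕ → ℝ := fun n => ∑' k, x (k + n) with htail
    have htail_summ : ∀ n, Summable fun k => x (k + n) := fun n =>
      (summable_nat_add_iff n).2 hsum
    have htail_rec : ∀ n, tail n = x n + tail (n + 1) := by
      intro n
      have := Summable.tsum_eq_zero_add (htail_summ n)
      simpa [htail, add_assoc, add_comm, add_left_comm] using this
    have hcond' : ∀ n, x n ≤ tail (n + 1) := by
      intro n
      refine (hcond n).trans_eq ?_
      exact tsum_congr fun k => by ring_nf
    -- g n ≤ y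
    have hgy : ∀ n, g n ≤ y := by
      intro n
      induction n with
      | zero => simpa [hg0] using hy0
      | succ n ih =>
        rw [hgsucc]
        split <;> [assumption; exact ih]
    -- y - g n ≤ tail n
    have hinv : ∀ n, y - g n ≤ tail n := by
      intro n
      induction n with
      | zero =>
        rw [hg0, sub_zero]
        refine hyS.trans_eq ?_
        exact tsum_congr fun k => by ring_nf
      | succ n ih =>
        rw [hgsucc]
        split
        · linarith [htail_rec n]
        · next h => linarith [hcond' n]
    -- indicator
    have hind : ∀ n, Set.indicator T x n = g (n + 1) - g n := by
      intro n
      by_cases h : n ∈ T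
      · rw [Set.indicator_of_mem h, hgsucc, if_pos (show g n + x n ≤ y from h)]
        ring
      · rw [Set.indicator_of_notMem h, hgsucc, if_neg (show ¬ g n + x n ≤ y from h)]
        ring
    have hpartial : ∀ n, ∑ k ∈ Finset.range n, Set.indicator T x k = g n := by
      intro n
      induction n with
      | zero => simp [hg0]
      | succ n ih =>
        rw [Finset.sum_range_succ, ih, hind]
        ring
    -- g tends to y
    have htail0 : Tendsto tail atTop (nhds 0) := tendsto_sum_nat_add x
    have hgy' : Tendsto g atTop (nhds y) := by
      have h1 : Tendsto (fun n => y - tail n) atTop (nhds y) := by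
        simpa using tendsto_const_nhds.sub htail0
      have h2 : Tendsto (fun _ : ℕ => y) atTop (nhds y) := tendsto_const_nhds
      refine tendsto_of_tendsto_of_tendsto_of_le_of_le h1 h2 ?_ ?_
      · intro n; show y - tail n ≤ g n; linarith [hinv n]
      · exact hgy
    -- summability of indicator
    have hsumm : Summable (Set.indicator T x) :=
      hsum.indicator T
    refine ⟨T, ?_⟩
    have htends : Tendsto (fun n => ∑ k ∈ Finset.range n, Set.indicator T x k) atTop (nhds y) := by
      simpa only [hpartial] using hgy'
    have := hsumm.hasSum.tendsto_sum_nat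
    have : (∑' n, Set.indicator T x n) = y := tendsto_nhds_unique this htends
    exact this ▸ hsumm.hasSum
end

section
/- (Generalized Kakeya lemma, part (a), global form) Let X_1, X_2, X_3, … be finite subsets of [0,∞), each with at least two elements, such that ∑_n max X_n converges. For each n let Δ_n be the largest length of the intervals into which the points of X_n subdivide [min X_n, max X_n] (i.e., the largest gap between consecutive elements of X_n), and let r_n := ∑_{k=n+1}^∞ (max X_k − min X_k). If r_n ≥ Δ_n holds for every n ∈ ℕ, then the sumset { ∑_{n=1}^∞ x_n : x_n ∈ X_n for every n ∈ ℕ } is exactly the interval [∑_{n=1}^∞ min X_n, ∑_{n=1}^∞ max X_n]. -/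
open Filter Topology

open scoped Classical in
/-- Greedy step: the largest element of `X n` that fits below `y - s - R (n+1)`. -/
noncomputable def kakG (X : ℕ → Finset ℝ) (m R : ℕ → ℝ) (y : ℝ) (n : ℕ) (s : ℝ) : ℝ :=
  if h : ((X n).filter (fun a => a ≤ y - s - R (n + 1))).Nonempty
  then ((X n).filter (fun a => a ≤ y - s - R (n + 1))).max' h
  else m n

/-- Greedy partial sums. -/
noncomputable def kakS (X : ℕ → Finset ℝ) (m R : ℕ → ℝ) (y : ℝ) : ℕ → ℝ
  | 0 => 0
  | n + 1 => kakS X m R y n + kakG X m R y n (kakS X m R y n)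

/-- Generalized Kakeya lemma, part (a), global form. Here `M n` and `m n` are the maximum and
minimum of the finite set `X n ⊆ [0,∞)`, `Δ n` is the largest gap between consecutive elements
of `X n`, and the condition `Δ n ≤ r n` (with `r n` the tail `∑_{k>n} (M k − m k)`) holds for
every `n`. Then the sumset equals `[∑ m n, ∑ M n]`. -/
theorem stmt7 (X : ℕ → Finset ℝ) (M m Δ : ℕ → ℝ)
    (hXpos : ∀ n, ∀ a ∈ X n, (0 : ℝ) ≤ a)
    (hcard : ∀ n, 2 ≤ (X n).card)
    (hM : ∀ n, IsGreatest (X n : Set ℝ) (M n))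
    (hm : ∀ n, IsLeast (X n : Set ℝ) (m n))
    (hΔ : ∀ n, IsGreatest {d : ℝ | ∃ a ∈ X n, ∃ b ∈ X n, a < b ∧
        (∀ c ∈ X n, c ≤ a ∨ b ≤ c) ∧ d = b - a} (Δ n))
    (hsum : Summable M)
    (hcond : ∀ n : ℕ, Δ n ≤ ∑' k : ℕ, (M (n + 1 + k) - m (n + 1 + k))) :
    {y : ℝ | ∃ x : ℕ → ℝ, (∀ n, x n ∈ X n) ∧ HasSum x y}
      = Set.Icc (∑' n, m n) (∑' n, M n) := by
  classical
  have hm0 : ∀ n, 0 ≤ m n := fun n => hXpos n _ (hm n).1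
  have hmM : ∀ n, m n ≤ M n := fun n => (hM n).2 (hm n).1
  have hms : Summable m := Summable.of_nonneg_of_le hm0 hmM hsum
  ext y
  simp only [Set.mem_setOf_eq, Set.mem_Icc]
  constructor
  · rintro ⟨x, hx, hxy⟩
    have hxm : ∀ n, m n ≤ x n := fun n => (hm n).2 (hx n)
    have hxM : ∀ n, x n ≤ M n := fun n => (hM n).2 (hx n)
    have hx0 : ∀ n, 0 ≤ x n := fun n => hXpos n _ (hx n)
    have hxs : Summable x := Summable.of_nonneg_of_le hx0 hxM hsum
    rw [← hxy.tsum_eq]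
    exact ⟨Summable.tsum_le_tsum hxm hms hxs, Summable.tsum_le_tsum hxM hxs hsum⟩
  · rintro ⟨hy1, hy2⟩
    set R : ℕ → ℝ := fun n => ∑' k, m (k + n) with hRdef
    set Q : ℕ → ℝ := fun n => ∑' k, M (k + n) with hQdef
    have hRs : ∀ n, Summable fun k => m (k + n) := fun n => (summable_nat_add_iff n).2 hms
    have hQs : ∀ n, Summable fun k => M (k + n) := fun n => (summable_nat_add_iff n).2 hsum
    have Rrec : ∀ n, R n = m n + R (n + 1) := by
      intro n
      have h := Summable.tsum_eq_zero_add (hRs n)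
      simp only [zero_add] at h
      rw [hRdef]
      simp only
      rw [h]
      congr 1
      exact tsum_congr fun k => congrArg m (by omega)
    have Qrec : ∀ n, Q n = M n + Q (n + 1) := by
      intro n
      have h := Summable.tsum_eq_zero_add (hQs n)
      simp only [zero_add] at h
      rw [hQdef]
      simp only
      rw [h]
      congr 1
      exact tsum_congr fun k => congrArg M (by omega)
    have Rtend : Tendsto R atTop (𝓝 0) := tendsto_sum_nat_add m
    have Qtend : Tendsto Q atTop (𝓝 0) := tendsto_sum_nat_add M
    have hgap : ∀ n, Δ n ≤ Q (n + 1) - R (n + 1) := by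
      intro n
      have h1 : (∑' k : ℕ, (M (n + 1 + k) - m (n + 1 + k)))
          = ∑' k : ℕ, (M (k + (n + 1)) - m (k + (n + 1))) :=
        tsum_congr fun k => by rw [show n + 1 + k = k + (n + 1) by omega]
      have h2 : (∑' k : ℕ, (M (k + (n + 1)) - m (k + (n + 1))))
          = Q (n + 1) - R (n + 1) := Summable.tsum_sub (hQs (n + 1)) (hRs (n + 1))
      calc Δ n ≤ _ := hcond n
        _ = Q (n + 1) - R (n + 1) := by rw [h1, h2]
    set s : ℕ → ℝ := kakS X m R y with hsdef
    set x : ℕ → ℝ := fun n => kakG X m R y n (s n) with hxdef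
    have hsS : ∀ n, s (n + 1) = s n + x n := fun n => rfl
    -- key nonemptiness of the filtered set, given the lower invariant
    have hfilter : ∀ n, R n ≤ y - s n →
        ((X n).filter (fun a => a ≤ y - s n - R (n + 1))).Nonempty := by
      intro n h
      refine ⟨m n, Finset.mem_filter.2 ⟨(hm n).1, ?_⟩⟩
      have := Rrec n
      linarith
    have main : ∀ n, R n ≤ y - s n ∧ y - s n ≤ Q n := by
      intro n
      induction n with
      | zero =>
        have hs0 : s 0 = 0 := rfl
        have hR0 : R 0 = ∑' k, m k := tsum_congr fun k => congrArg m (by omega)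
        have hQ0 : Q 0 = ∑' k, M k := tsum_congr fun k => congrArg M (by omega)
        rw [hs0, hR0, hQ0]
        constructor <;> linarith
      | succ n ih =>
        obtain ⟨ih1, ih2⟩ := ih
        have hTne := hfilter n ih1
        have hxeq : x n = ((X n).filter (fun a => a ≤ y - s n - R (n + 1))).max' hTne := by
          rw [hxdef]
          simp only [kakG]
          rw [dif_pos hTne]
        have hxmem := Finset.mem_filter.1
          (((X n).filter (fun a => a ≤ y - s n - R (n + 1))).max'_mem hTne)
        have hxX : x n ∈ X n := hxeq ▸ hxmem.1
        have hxle : x n ≤ y - s n - R (n + 1) := hxeq ▸ hxmem.2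
        constructor
        · rw [hsS n]; linarith
        · rw [hsS n]
          by_cases hMn : M n ≤ y - s n - R (n + 1)
          · have hMx : M n ≤ x n := by
              rw [hxeq]
              have hmem : M n ∈ (X n).filter (fun a => a ≤ y - s n - R (n + 1)) :=
                Finset.mem_filter.2 ⟨(hM n).1, hMn⟩
              exact Finset.le_max' _ _ hmem
            have := Qrec n
            linarith
          · push_neg at hMn
            have hxlt : x n < M n := lt_of_le_of_lt hxle hMn
            have hSne : ((X n).filter (fun c => x n < c)).Nonempty :=
              ⟨M n, Finset.mem_filter.2 ⟨(hM n).1, hxlt⟩⟩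
            set b := ((X n).filter (fun c => x n < c)).min' hSne with hbdef
            have hbmem := Finset.mem_filter.1
              (((X n).filter (fun c => x n < c)).min'_mem hSne)
            have hbX : b ∈ X n := hbmem.1
            have hbgt : x n < b := hbmem.2
            have hbnot : ¬ b ≤ y - s n - R (n + 1) := by
              intro h
              have : b ≤ x n := by
                rw [hxeq]
                have hmem : b ∈ (X n).filter (fun a => a ≤ y - s n - R (n + 1)) :=
                  Finset.mem_filter.2 ⟨hbX, h⟩
                exact Finset.le_max' _ _ hmem
              linarith
            push_neg at hbnot
            have hgapmem : b - x n ≤ Δ n := by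
              refine (hΔ n).2 ⟨x n, hxX, b, hbX, hbgt, ?_, rfl⟩
              intro c hc
              by_cases hcx : c ≤ x n
              · exact Or.inl hcx
              · exact Or.inr (Finset.min'_le _ c
                  (Finset.mem_filter.2 ⟨hc, lt_of_not_ge hcx⟩))
            have := hgap n
            linarith
    have hxX : ∀ n, x n ∈ X n := by
      intro n
      have hTne := hfilter n (main n).1
      have hxeq : x n = ((X n).filter (fun a => a ≤ y - s n - R (n + 1))).max' hTne := by
        rw [hxdef]
        simp only [kakG]
        rw [dif_pos hTne]
      exact hxeq ▸ (Finset.mem_filter.1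
        (((X n).filter (fun a => a ≤ y - s n - R (n + 1))).max'_mem hTne)).1
    have hspart : ∀ n, s n = ∑ i ∈ Finset.range n, x i := by
      intro n
      induction n with
      | zero => rfl
      | succ n ih => rw [hsS n, ih, Finset.sum_range_succ]
    have hdiff : Tendsto (fun n => y - s n) atTop (𝓝 0) :=
      tendsto_of_tendsto_of_tendsto_of_le_of_le Rtend Qtend
        (fun n => (main n).1) (fun n => (main n).2)
    have hstend : Tendsto s atTop (𝓝 y) := by
      have := tendsto_const_nhds (x := y) (f := atTop (α := ℕ)) |>.sub hdiff
      simpa using this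
    have hxs : Summable x :=
      Summable.of_nonneg_of_le (fun n => hXpos n _ (hxX n)) (fun n => (hM n).2 (hxX n)) hsum
    have hpart : Tendsto (fun n => ∑ i ∈ Finset.range n, x i) atTop (𝓝 (∑' n, x n)) :=
      hxs.hasSum.tendsto_sum_nat
    have hyeq : (∑' n, x n) = y := by
      apply tendsto_nhds_unique hpart
      have : (fun n => ∑ i ∈ Finset.range n, x i) = s := by
        funext n; exact (hspart n).symm
      rw [this]; exact hstend
    exact ⟨x, hxX, hyeq ▸ hxs.hasSum⟩
end

section
/- (Generalized Kakeya lemma, part (a), eventual form) Let X_1, X_2, X_3, … be finite subsets of [0,∞), each with at least two elements, such that ∑_n max X_n converges. With Δ_n the largest gap between consecutive elements of X_n and r_n := ∑_{k=n+1}^∞ (max X_k − min X_k), suppose r_n ≥ Δ_n holds for every sufficiently large n ∈ ℕ. Then the sumset { ∑_{n=1}^∞ x_n : x_n ∈ X_n for every n ∈ ℕ } is a finite union of nondegenerate bounded closed intervals of ℝ. -/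
open Filter

section KakeyaAux
open Finset

private lemma shift_summable (f : ℕ → ℝ) (hf : Summable f) (n : ℕ) :
    Summable fun k => f (n + k) := by
  have := (summable_nat_add_iff (f := f) n).mpr hf
  exact this.congr fun k => by rw [Nat.add_comm]

private lemma tail_split (f : ℕ → ℝ) (hf : Summable f) (n : ℕ) :
    ∑' k, f (n + k) = f n + ∑' k, f (n + 1 + k) := by
  rw [Summable.tsum_eq_zero_add (shift_summable f hf n)]
  congr 1
  exact tsum_congr fun k => by rw [show n + (k + 1) = n + 1 + k by omega]

open scoped Classical in
private noncomputable def kpick (Y : ℕ → Finset ℝ) (m : ℕ → ℝ) (t : ℝ) (tm : ℕ → ℝ)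
    (n : ℕ) (s : ℝ) : ℝ :=
  if h : ((Y n).filter (fun y => s + y + tm (n + 1) ≤ t)).Nonempty
  then ((Y n).filter (fun y => s + y + tm (n + 1) ≤ t)).max' h else m n

private noncomputable def kS (Y : ℕ → Finset ℝ) (m : ℕ → ℝ) (t : ℝ) (tm : ℕ → ℝ) : ℕ → ℝ
  | 0 => 0
  | (n + 1) => kS Y m t tm n + kpick Y m t tm n (kS Y m t tm n)

private lemma kakeya_interval (Y : ℕ → Finset ℝ) (M m Δ : ℕ → ℝ)
    (hpos : ∀ n, ∀ a ∈ Y n, (0 : ℝ) ≤ a)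
    (hM : ∀ n, IsGreatest (Y n : Set ℝ) (M n))
    (hm : ∀ n, IsLeast (Y n : Set ℝ) (m n))
    (hgap : ∀ n, ∀ a ∈ Y n, a < M n → ∃ b ∈ Y n, a < b ∧ b - a ≤ Δ n)
    (hsum : Summable M)
    (hcond : ∀ n, Δ n ≤ ∑' k : ℕ, (M (n + 1 + k) - m (n + 1 + k)))
    (t : ℝ) (h1 : (∑' n, m n) ≤ t) (h2 : t ≤ ∑' n, M n) :
    ∃ x : ℕ → ℝ, (∀ n, x n ∈ Y n) ∧ HasSum x t := by
  classical
  have hm0 : ∀ n, 0 ≤ m n := fun n => hpos n _ (hm n).1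
  have hmM : ∀ n, m n ≤ M n := fun n => (hm n).2 (hM n).1
  have hmsum : Summable m := Summable.of_nonneg_of_le hm0 hmM hsum
  set tm : ℕ → ℝ := fun n => ∑' k, m (n + k) with htm
  set tM : ℕ → ℝ := fun n => ∑' k, M (n + k) with htM
  have htmsplit : ∀ n, tm n = m n + tm (n + 1) := fun n => tail_split m hmsum n
  have htMsplit : ∀ n, tM n = M n + tM (n + 1) := fun n => tail_split M hsum n
  have htm0 : ∀ n, 0 ≤ tm n := fun n => tsum_nonneg fun k => hm0 _
  have hΔkey : ∀ n, Δ n + tm (n + 1) ≤ tM (n + 1) := by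
    intro n
    have hs1 : Summable fun k => M (n + 1 + k) := shift_summable M hsum (n + 1)
    have hs2 : Summable fun k => m (n + 1 + k) := shift_summable m hmsum (n + 1)
    have := hcond n
    rw [Summable.tsum_sub hs1 hs2] at this
    simp only [htm, htM]
    linarith
  set pick : ℕ → ℝ → ℝ := kpick Y m t tm with hpick
  set S : ℕ → ℝ := kS Y m t tm with hS
  have hSsucc : ∀ n, S (n + 1) = S n + pick n (S n) := fun n => rfl
  set x : ℕ → ℝ := fun n => pick n (S n) with hx
  have hxmem : ∀ n, x n ∈ Y n := by
    intro n
    simp only [hx, hpick, kpick]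
    split
    · exact Finset.mem_of_mem_filter _ (Finset.max'_mem _ _)
    · exact (hm n).1
  -- the invariant
  have inv : ∀ n, S n + tm n ≤ t ∧ t ≤ S n + tM n := by
    intro n
    induction n with
    | zero =>
      have hS0 : S 0 = 0 := rfl
      have e1 : tm 0 = ∑' n, m n := tsum_congr fun k => by rw [Nat.zero_add]
      have e2 : tM 0 = ∑' n, M n := tsum_congr fun k => by rw [Nat.zero_add]
      rw [hS0, e1, e2]; constructor <;> linarith
    | succ n ih =>
      obtain ⟨ih1, ih2⟩ := ih
      set F := (Y n).filter (fun y => S n + y + tm (n + 1) ≤ t) with hF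
      have hmF : m n ∈ F := by
        rw [hF, Finset.mem_filter]
        refine ⟨(hm n).1, ?_⟩
        have := htmsplit n
        linarith
      have hne : F.Nonempty := ⟨_, hmF⟩
      have hxval : x n = F.max' hne := by
        simp only [hx, hpick, kpick, hF]
        rw [dif_pos hne]
      have hxF : x n ∈ F := hxval ▸ Finset.max'_mem F hne
      have hxle : S n + x n + tm (n + 1) ≤ t := (Finset.mem_filter.mp hxF).2
      have hlow : S (n + 1) + tm (n + 1) ≤ t := by rw [hSsucc]; exact hxle
      refine ⟨hlow, ?_⟩
      rcases eq_or_lt_of_le ((hM n).2 (by exact_mod_cast hxmem n : (x n : ℝ) ∈ (Y n : Set ℝ))) with heq | hlt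
      · -- x n = M n
        have := htMsplit n
        rw [hSsucc]
        rw [show pick n (S n) = x n from rfl]
        rw [heq] at *
        linarith
      · obtain ⟨b, hbY, hab, hbΔ⟩ := hgap n (x n) (hxmem n) hlt
        have hbnotF : b ∉ F := by
          intro hbF
          exact absurd (Finset.le_max' F b hbF) (by rw [← hxval] at *; linarith)
        have hbig : ¬ (S n + b + tm (n + 1) ≤ t) := by
          intro hc
          exact hbnotF (Finset.mem_filter.mpr ⟨hbY, hc⟩)
        push_neg at hbig
        have := hΔkey n
        rw [hSsucc]
        rw [show pick n (S n) = x n from rfl]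
        linarith
  -- partial sums
  have hSsum : ∀ n, S n = ∑ i ∈ range n, x i := by
    intro n
    induction n with
    | zero => simp; rfl
    | succ n ih => rw [Finset.sum_range_succ, ← ih, hSsucc]
  -- limits of tails
  have htmlim : Tendsto tm atTop (nhds 0) :=
    (tendsto_sum_nat_add m).congr fun n => tsum_congr fun k => by rw [Nat.add_comm]
  have htMlim : Tendsto tM atTop (nhds 0) :=
    (tendsto_sum_nat_add M).congr fun n => tsum_congr fun k => by rw [Nat.add_comm]
  have hSlim : Tendsto S atTop (nhds t) := by
    have h1' : Tendsto (fun n => t - tM n) atTop (nhds t) := by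
      simpa using tendsto_const_nhds.sub htMlim
    have h2' : Tendsto (fun n => t - tm n) atTop (nhds t) := by
      simpa using tendsto_const_nhds.sub htmlim
    refine tendsto_of_tendsto_of_tendsto_of_le_of_le h1' h2' (fun n => ?_) (fun n => ?_)
    · show t - tM n ≤ S n; have := (inv n).2; linarith
    · show S n ≤ t - tm n; have := (inv n).1; linarith
  have hxnn : ∀ n, 0 ≤ x n := fun n => hpos n _ (hxmem n)
  have hxsum : Summable x := by
    refine summable_of_sum_range_le (c := t) hxnn fun n => ?_
    rw [← hSsum]
    have := (inv n).1
    have := htm0 n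
    linarith
  have : HasSum x (∑' n, x n) := hxsum.hasSum
  have hts : Tendsto S atTop (nhds (∑' n, x n)) := by
    have := this.tendsto_sum_nat
    exact this.congr fun n => (hSsum n).symm
  have : (∑' n, x n) = t := tendsto_nhds_unique hts hSlim
  exact ⟨x, hxmem, this ▸ hxsum.hasSum⟩
end KakeyaAux

/-- Generalized Kakeya lemma, part (a), eventual form. If `Δ n ≤ r n` holds for all
sufficiently large `n`, then the sumset is a finite union of nondegenerate bounded closed
intervals. -/
theorem stmt8 (X : ℕ → Finset ℝ) (M m Δ : ℕ → ℝ)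
    (hXpos : ∀ n, ∀ a ∈ X n, (0 : ℝ) ≤ a)
    (hcard : ∀ n, 2 ≤ (X n).card)
    (hM : ∀ n, IsGreatest (X n : Set ℝ) (M n))
    (hm : ∀ n, IsLeast (X n : Set ℝ) (m n))
    (hΔ : ∀ n, IsGreatest {d : ℝ | ∃ a ∈ X n, ∃ b ∈ X n, a < b ∧
        (∀ c ∈ X n, c ≤ a ∨ b ≤ c) ∧ d = b - a} (Δ n))
    (hsum : Summable M)
    (hcond : ∀ᶠ n in atTop, Δ n ≤ ∑' k : ℕ, (M (n + 1 + k) - m (n + 1 + k))) :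
    ∃ s : Finset (ℝ × ℝ), (∀ p ∈ s, p.1 < p.2) ∧
      {y : ℝ | ∃ x : ℕ → ℝ, (∀ n, x n ∈ X n) ∧ HasSum x y} = ⋃ p ∈ s, Set.Icc p.1 p.2 := by
  classical
  obtain ⟨N, hN⟩ := eventually_atTop.mp hcond
  have hm0 : ∀ n, 0 ≤ m n := fun n => hXpos n _ (hm n).1
  have hmM : ∀ n, m n ≤ M n := fun n => (hm n).2 (hM n).1
  have hmsum : Summable m := Summable.of_nonneg_of_le hm0 hmM hsum
  have hmltM : ∀ n, m n < M n := by
    intro n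
    obtain ⟨a, ha, b, hb, hab⟩ := Finset.one_lt_card.mp (by have := hcard n; omega : 1 < (X n).card)
    rcases lt_or_eq_of_le (hmM n) with h | h
    · exact h
    · exfalso
      apply hab
      have h1 : m n ≤ a := (hm n).2 ha
      have h2 : a ≤ M n := (hM n).2 ha
      have h3 : m n ≤ b := (hm n).2 hb
      have h4 : b ≤ M n := (hM n).2 hb
      have e1 : a = M n := le_antisymm h2 (h ▸ h1)
      have e2 : b = M n := le_antisymm h4 (h ▸ h3)
      rw [e1, e2]
  -- gap property
  have hgap : ∀ j, ∀ a ∈ X j, a < M j → ∃ b ∈ X j, a < b ∧ b - a ≤ Δ j := by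
    intro j a ha haM
    set F := (X j).filter (fun c => a < c) with hF
    have hMF : M j ∈ F := Finset.mem_filter.mpr ⟨(hM j).1, haM⟩
    have hne : F.Nonempty := ⟨_, hMF⟩
    set b := F.min' hne with hb
    have hbF : b ∈ F := Finset.min'_mem _ _
    have hbX : b ∈ X j := Finset.mem_of_mem_filter _ hbF
    have hab : a < b := (Finset.mem_filter.mp hbF).2
    refine ⟨b, hbX, hab, ?_⟩
    apply (hΔ j).2
    refine ⟨a, ha, b, hbX, hab, ?_, rfl⟩
    intro c hc
    rcases le_or_gt c a with h | h
    · exact Or.inl h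
    · exact Or.inr (Finset.min'_le F c (Finset.mem_filter.mpr ⟨hc, h⟩))
  set a0 : ℝ := ∑' k, m (N + k) with ha0
  set b0 : ℝ := ∑' k, M (N + k) with hb0
  have hsumM' : Summable fun k => M (N + k) := shift_summable M hsum N
  have hsumm' : Summable fun k => m (N + k) := shift_summable m hmsum N
  have hab0 : a0 < b0 :=
    Summable.tsum_lt_tsum (i := 0) (fun k => hmM _) (hmltM (N + 0)) hsumm' hsumM'
  set s : Finset (ℝ × ℝ) := (Finset.univ : Finset ((i : Fin N) → ↥(X i))).image
      (fun c => (∑ i, (c i : ℝ) + a0, ∑ i, (c i : ℝ) + b0)) with hs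
  refine ⟨s, ?_, ?_⟩
  · intro p hp
    simp only [hs, Finset.mem_image] at hp
    obtain ⟨c, -, rfl⟩ := hp
    simp
    exact hab0
  ext y
  simp only [Set.mem_setOf_eq, Set.mem_iUnion]
  constructor
  · rintro ⟨x, hx, hxy⟩
    refine ⟨(∑ i ∈ Finset.range N, x i + a0, ∑ i ∈ Finset.range N, x i + b0), ?_, ?_⟩
    · simp only [hs, Finset.mem_image]
      refine ⟨fun i => ⟨x i, hx i⟩, Finset.mem_univ _, ?_⟩
      have e : (∑ i : Fin N, x (i : ℕ)) = ∑ i ∈ Finset.range N, x i :=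
        Fin.sum_univ_eq_sum_range (fun i => x i) N
      simp only []
      rw [e]
    · have ht : HasSum (fun k => x (k + N)) (y - ∑ i ∈ Finset.range N, x i) := by
        refine (hasSum_nat_add_iff N).mpr ?_
        simpa using hxy
      have hle1 : a0 ≤ ∑' k, x (k + N) :=
        Summable.tsum_le_tsum (fun k => (hm (N + k)).2
          (by rw [Nat.add_comm N k]; exact Finset.mem_coe.mpr (hx (k + N))))
          hsumm' ht.summable
      have hle2 : (∑' k, x (k + N)) ≤ b0 :=
        Summable.tsum_le_tsum (fun k => (hM (N + k)).2
          (by rw [Nat.add_comm N k]; exact Finset.mem_coe.mpr (hx (k + N))))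
          ht.summable hsumM'
      rw [ht.tsum_eq] at hle1 hle2
      simp only [Set.mem_Icc]
      constructor <;> linarith
  · rintro ⟨p, hp, hyp⟩
    simp only [hs, Finset.mem_image] at hp
    obtain ⟨c, -, rfl⟩ := hp
    simp only [Set.mem_Icc] at hyp
    obtain ⟨hy1, hy2⟩ := hyp
    set Sc := ∑ i : Fin N, (c i : ℝ) with hSc
    have hcond' : ∀ n, Δ (N + n) ≤ ∑' k : ℕ, (M (N + (n + 1 + k)) - m (N + (n + 1 + k))) := by
      intro n
      have h := hN (N + n) (Nat.le_add_right N n)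
      have e : (∑' k : ℕ, (M (N + n + 1 + k) - m (N + n + 1 + k)))
          = ∑' k : ℕ, (M (N + (n + 1 + k)) - m (N + (n + 1 + k))) :=
        tsum_congr fun k => by rw [show N + n + 1 + k = N + (n + 1 + k) by omega]
      rw [← e]; exact h
    obtain ⟨x', hx', hsx'⟩ := kakeya_interval (fun n => X (N + n)) (fun n => M (N + n))
      (fun n => m (N + n)) (fun n => Δ (N + n))
      (fun n a ha => hXpos _ a ha) (fun n => hM _) (fun n => hm _)
      (fun n a ha h => hgap _ a ha h)
      (shift_summable M hsum N) hcond' (y - Sc)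
      (by show a0 ≤ y - Sc; linarith) (by show y - Sc ≤ b0; linarith)
    set xfull : ℕ → ℝ := fun n => if h : n < N then (c ⟨n, h⟩ : ℝ) else x' (n - N) with hxf
    refine ⟨xfull, fun n => ?_, ?_⟩
    · by_cases h : n < N
      · simpa [hxf, h] using (c ⟨n, h⟩).2
      · have h2 := hx' (n - N)
        rw [show N + (n - N) = n by omega] at h2
        simpa [hxf, h] using h2
    · have hxeq : (fun k => xfull (k + N)) = x' := by
        funext k
        simp [hxf, show ¬ (k + N < N) by omega, Nat.add_sub_cancel]
      have hh : HasSum (fun k => xfull (k + N)) (y - Sc) := by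
        rw [hxeq]; exact hsx'
      have hfin := (hasSum_nat_add_iff N).mp hh
      have hsumeq : (∑ i ∈ Finset.range N, xfull i) = Sc := by
        rw [← Fin.sum_univ_eq_sum_range]
        exact Finset.sum_congr rfl fun i _ => by simp [hxf, i.isLt]
      rw [hsumeq] at hfin
      simpa using hfin
end

section
/- (Generalized Kakeya lemma, part (b)) Let X_1, X_2, X_3, … be finite subsets of [0,∞), each with at least two elements, such that ∑_n max X_n converges. With δ_n the smallest gap between consecutive elements of X_n and r_n := ∑_{k=n+1}^∞ (max X_k − min X_k), suppose r_n < δ_n holds for every sufficiently large n ∈ ℕ. Then the sumset { ∑_{n=1}^∞ x_n : x_n ∈ X_n for every n ∈ ℕ } is a closed subset of ℝ with empty interior. -/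
/-!
Write `S n` for the set of sums `∑_{k ≥ n} x_k` with `x_k ∈ X_k`. Each `S n` is compact (a
continuous image of the compact product `∏ X_k`), lies in an interval of length `r_{n-1}`, and
`S n = X_n + S (n + 1)`. When `r_n < δ_n` the translates `a + S (n + 1)`, `a ∈ X_n`, lie in
pairwise disjoint closed intervals, so an open interval inside `S n` lies in a single translate
and reappears, shifted, in `S (n + 1)`. Iterating from an index `N` beyond which `r_n < δ_n`, an
open interval in `S N` would fit into `S n` for every large `n`, although the widths `r_{n-1}` tend
to `0`. So `S N` has empty interior, and so does `S 0`, a finite union of translates of the closed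
set `S N`.
-/

open Filter Topology Pointwise Set

def sumset {E : Type*} [AddCommMonoid E] [TopologicalSpace E] (X : ℕ → Finset E) : Set E :=
  {y | ∃ x : ℕ → E, (∀ n, x n ∈ X n) ∧ HasSum x y}

def tailSumset {E : Type*} [AddCommMonoid E] [TopologicalSpace E] (X : ℕ → Finset E) (n : ℕ) :
    Set E :=
  sumset fun k => X (n + k)

theorem tailSumset_zero {E : Type*} [AddCommMonoid E] [TopologicalSpace E] (X : ℕ → Finset E) :
    tailSumset X 0 = sumset X := by
  simp only [tailSumset, zero_add]

section Group

variable {E : Type*} [AddCommGroup E] [TopologicalSpace E] [IsTopologicalAddGroup E]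

theorem sumset_eq_add_sumset_succ (X : ℕ → Finset E) :
    sumset X = (X 0 : Set E) + sumset fun n => X (n + 1) := by
  ext y
  constructor
  · rintro ⟨x, hx, hxy⟩
    refine ⟨x 0, hx 0, y - x 0, ⟨fun n => x (n + 1), fun n => hx (n + 1), ?_⟩, add_sub_cancel _ _⟩
    simpa using (hasSum_nat_add_iff' 1).2 hxy
  · rintro ⟨a, ha, z, ⟨x, hx, hxz⟩, rfl⟩
    refine ⟨fun n => Nat.casesOn n a x, fun n => ?_, ?_⟩
    · cases n with
      | zero => exact ha
      | succ n => exact hx n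
    · exact (hasSum_nat_add_iff' 1).1 (by simpa using hxz)

theorem tailSumset_eq_add_tailSumset_succ (X : ℕ → Finset E) (n : ℕ) :
    tailSumset X n = (X n : Set E) + tailSumset X (n + 1) := by
  simp_rw [tailSumset, sumset_eq_add_sumset_succ (fun k => X (n + k)), add_zero, ← add_assoc,
    add_right_comm n _ 1]

end Group

theorem isCompact_sumset {E : Type*} [NormedAddCommGroup E] [CompleteSpace E]
    (X : ℕ → Finset E) {M : ℕ → ℝ} (hX : ∀ n, ∀ a ∈ X n, ‖a‖ ≤ M n) (hM : Summable M) :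
    IsCompact (sumset X) := by
  have himage : sumset X = (fun x : ℕ → E => ∑' n, x n) '' pi univ fun n => (X n : Set E) := by
    ext y
    constructor
    · rintro ⟨x, hx, hxy⟩
      exact ⟨x, fun n _ => hx n, hxy.tsum_eq⟩
    · rintro ⟨x, hx, rfl⟩
      have hx' : ∀ n, x n ∈ X n := fun n => hx n (mem_univ n)
      exact ⟨x, hx', (Summable.of_norm_bounded hM fun n => hX n _ (hx' n)).hasSum⟩
  rw [himage]
  refine (isCompact_univ_pi fun n => (X n).finite_toSet.isCompact).image_of_continuousOn ?_
  exact continuousOn_tsum (fun n => (continuous_apply n).continuousOn) hM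
    fun n x hx => hX n _ (hx n (mem_univ n))

theorem sumset_subset_Icc (X : ℕ → Finset ℝ) {m M : ℕ → ℝ} (hm : ∀ n, ∀ a ∈ X n, m n ≤ a)
    (hM : ∀ n, ∀ a ∈ X n, a ≤ M n) (hm_sum : Summable m) (hM_sum : Summable M) :
    sumset X ⊆ Icc (∑' n, m n) (∑' n, M n) := by
  rintro y ⟨x, hx, hxy⟩
  exact ⟨hasSum_le (fun n => hm n _ (hx n)) hm_sum.hasSum hxy,
    hasSum_le (fun n => hM n _ (hx n)) hxy hM_sum.hasSum⟩

theorem interior_finset_add_eq_empty {G : Type*} [AddGroup G] [TopologicalSpace G]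
    [IsTopologicalAddGroup G] (A : Finset G) {T : Set G} (hT : IsClosed T)
    (hT_int : interior T = ∅) : interior ((A : Set G) + T) = ∅ := by
  classical
  induction A using Finset.induction_on with
  | empty => simp
  | insert a A _ ih =>
    rw [Finset.coe_insert, ← image2_add, image2_insert_left, image2_add,
      show (a + ·) '' T = a +ᵥ T from rfl, interior_union_isClosed_of_interior_empty (hT.vadd a) ih,
      interior_vadd, hT_int, vadd_set_empty]

-- The intervals `a + [α, β]`, `a ∈ A`, are pairwise disjoint and closed, so the preconnected `I`
-- meets only one of them.
theorem exists_subset_vadd_of_isPreconnected {A : Finset ℝ} {T I : Set ℝ} {α β : ℝ}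
    (hT : T ⊆ Icc α β) (hA : ∀ a ∈ A, ∀ b ∈ A, a < b → β - α < b - a)
    (hI : IsPreconnected I) (hI_ne : I.Nonempty) (hIA : I ⊆ (A : Set ℝ) + T) :
    ∃ a ∈ A, I ⊆ a +ᵥ T := by
  classical
  have hmem : ∀ b, ∀ t ∈ T, b + t ∈ Icc (b + α) (b + β) := fun b t ht =>
    ⟨by linarith [(hT ht).1], by linarith [(hT ht).2]⟩
  have hsep : ∀ a ∈ A, ∀ b ∈ A, ∀ z ∈ Icc (a + α) (a + β), z ∈ Icc (b + α) (b + β) → a = b := by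
    intro a ha b hb z hza hzb
    by_contra hab
    rcases lt_or_gt_of_ne hab with h | h
    · linarith [hA a ha b hb h, hza.2, hzb.1]
    · linarith [hA b hb a ha h, hza.1, hzb.2]
  obtain ⟨_, hy⟩ := hI_ne
  obtain ⟨a, ha, t, ht, rfl⟩ := hIA hy
  set u := Icc (a + α) (a + β)
  set v := ⋃ b ∈ A.erase a, Icc (b + α) (b + β)
  have huv : ∀ z ∈ u, z ∉ v := by
    intro z hzu hzv
    obtain ⟨b, hb, hzb⟩ := mem_iUnion₂.1 hzv
    exact Finset.ne_of_mem_erase hb (hsep a ha b (Finset.mem_of_mem_erase hb) z hzu hzb).symm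
  have hcover : I ⊆ u ∪ v := by
    intro z hz
    obtain ⟨b, hb, s, hs, rfl⟩ := hIA hz
    by_cases hba : b = a
    · exact Or.inl (hba ▸ hmem b s hs)
    · exact Or.inr (mem_biUnion (Finset.mem_erase.2 ⟨hba, hb⟩) (hmem b s hs))
  have hv_closed : IsClosed v :=
    (A.erase a).finite_toSet.isClosed_biUnion fun _ _ => isClosed_Icc
  rcases isPreconnected_iff_subset_of_disjoint_closed.1 hI u v isClosed_Icc hv_closed hcover
    (eq_empty_iff_forall_notMem.2 fun z hz => huv z hz.2.1 hz.2.2) with hIu | hIv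
  · refine ⟨a, ha, fun z hz => ?_⟩
    obtain ⟨b, hb, s, hs, rfl⟩ := hIA hz
    obtain rfl := hsep a ha b hb _ (hIu hz) (hmem b s hs)
    exact ⟨s, hs, rfl⟩
  · exact (huv _ (hmem a t ht) (hIv hy)).elim

theorem le_sub_of_mem_lowerBounds_gaps {α : Type*} [AddCommGroup α] [LinearOrder α]
    [IsOrderedAddMonoid α] {s : Finset α} {δ : α}
    (hδ : δ ∈ lowerBounds {d | ∃ a ∈ s, ∃ b ∈ s, a < b ∧ (∀ c ∈ s, c ≤ a ∨ b ≤ c) ∧ d = b - a})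
    {a b : α} (ha : a ∈ s) (hb : b ∈ s) (hab : a < b) : δ ≤ b - a := by
  classical
  have hb_mem : b ∈ s.filter (a < ·) := Finset.mem_filter.2 ⟨hb, hab⟩
  set b' := (s.filter (a < ·)).min' ⟨b, hb_mem⟩
  obtain ⟨hb's, hab'⟩ := Finset.mem_filter.1 (Finset.min'_mem _ ⟨b, hb_mem⟩)
  have ha_mem : a ∈ s.filter (· < b') := Finset.mem_filter.2 ⟨ha, hab'⟩
  set a' := (s.filter (· < b')).max' ⟨a, ha_mem⟩
  obtain ⟨ha's, ha'b'⟩ := Finset.mem_filter.1 (Finset.max'_mem _ ⟨a, ha_mem⟩)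
  have hconsec : ∀ c ∈ s, c ≤ a' ∨ b' ≤ c := fun c hc =>
    (lt_or_ge c b').imp (fun h => Finset.le_max' _ _ (Finset.mem_filter.2 ⟨hc, h⟩)) id
  calc δ ≤ b' - a' := hδ ⟨a', ha's, b', hb's, ha'b', hconsec, rfl⟩
    _ ≤ b - a := sub_le_sub (Finset.min'_le _ _ hb_mem) (Finset.le_max' _ _ ha_mem)

theorem interior_tailSumset_eq_empty_of_le {E : Type*} [AddCommGroup E] [TopologicalSpace E]
    [IsTopologicalAddGroup E] {X : ℕ → Finset E} (hclosed : ∀ n, IsClosed (tailSumset X n))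
    {N : ℕ} (hN : interior (tailSumset X N) = ∅) {n : ℕ} (hn : n ≤ N) :
    interior (tailSumset X n) = ∅ := by
  refine Nat.decreasingInduction (fun k _ ih => ?_) hN hn
  rw [tailSumset_eq_add_tailSumset_succ]
  exact interior_finset_add_eq_empty _ (hclosed _) ih

section Tail

variable {X : ℕ → Finset ℝ} {m M : ℕ → ℝ}

theorem tsum_nat_add_sub (hm_sum : Summable m) (hM_sum : Summable M) (n : ℕ) :
    ∑' k, (M (n + k) - m (n + k)) = ∑' k, M (n + k) - ∑' k, m (n + k) :=
  (hM_sum.comp_injective (add_right_injective n)).tsum_sub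
    (hm_sum.comp_injective (add_right_injective n))

theorem tailSumset_subset_Icc (hm : ∀ n, ∀ a ∈ X n, m n ≤ a) (hM : ∀ n, ∀ a ∈ X n, a ≤ M n)
    (hm_sum : Summable m) (hM_sum : Summable M) (n : ℕ) :
    tailSumset X n ⊆ Icc (∑' k, m (n + k)) (∑' k, M (n + k)) :=
  sumset_subset_Icc _ (fun k => hm (n + k)) (fun k => hM (n + k))
    (hm_sum.comp_injective (add_right_injective n)) (hM_sum.comp_injective (add_right_injective n))

theorem exists_Ioo_subset_tailSumset_succ (hm : ∀ n, ∀ a ∈ X n, m n ≤ a)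
    (hM : ∀ n, ∀ a ∈ X n, a ≤ M n) (hm_sum : Summable m) (hM_sum : Summable M) {n : ℕ}
    (hgap : ∀ a ∈ X n, ∀ b ∈ X n, a < b → ∑' k, (M (n + 1 + k) - m (n + 1 + k)) < b - a)
    {c d : ℝ} (hcd : c < d) (hsub : Ioo c d ⊆ tailSumset X n) :
    ∃ a, Ioo (c - a) (d - a) ⊆ tailSumset X (n + 1) := by
  rw [tailSumset_eq_add_tailSumset_succ] at hsub
  obtain ⟨a, -, ha⟩ := exists_subset_vadd_of_isPreconnected
    (tailSumset_subset_Icc hm hM hm_sum hM_sum (n + 1))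
    (fun a ha b hb hab => tsum_nat_add_sub hm_sum hM_sum (n + 1) ▸ hgap a ha b hb hab)
    isPreconnected_Ioo (nonempty_Ioo.2 hcd) hsub
  refine ⟨a, fun y hy => ?_⟩
  obtain ⟨s, hs, hsy⟩ := ha (show y + a ∈ Ioo c d from ⟨by linarith [hy.1], by linarith [hy.2]⟩)
  obtain rfl : s = y := by simp only [vadd_eq_add] at hsy; linarith
  exact hs

theorem exists_Ioo_subset_tailSumset_add (hm : ∀ n, ∀ a ∈ X n, m n ≤ a)
    (hM : ∀ n, ∀ a ∈ X n, a ≤ M n) (hm_sum : Summable m) (hM_sum : Summable M) {N : ℕ}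
    (hgap : ∀ n ≥ N, ∀ a ∈ X n, ∀ b ∈ X n, a < b →
      ∑' k, (M (n + 1 + k) - m (n + 1 + k)) < b - a)
    {c d : ℝ} (hcd : c < d) (hsub : Ioo c d ⊆ tailSumset X N) (j : ℕ) :
    ∃ t, Ioo (c + t) (d + t) ⊆ tailSumset X (N + j) := by
  induction j with
  | zero => exact ⟨0, by simpa using hsub⟩
  | succ j ih =>
    obtain ⟨t, ht⟩ := ih
    obtain ⟨a, ha⟩ := exists_Ioo_subset_tailSumset_succ hm hM hm_sum hM_sum
      (hgap (N + j) (Nat.le_add_right N j)) (by linarith) ht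
    rw [add_sub_assoc, add_sub_assoc] at ha
    exact ⟨t - a, ha⟩

theorem interior_tailSumset_eq_empty (hm : ∀ n, ∀ a ∈ X n, m n ≤ a)
    (hM : ∀ n, ∀ a ∈ X n, a ≤ M n) (hm_sum : Summable m) (hM_sum : Summable M) {N : ℕ}
    (hgap : ∀ n ≥ N, ∀ a ∈ X n, ∀ b ∈ X n, a < b →
      ∑' k, (M (n + 1 + k) - m (n + 1 + k)) < b - a) :
    interior (tailSumset X N) = ∅ := by
  by_contra h
  obtain ⟨u, hu⟩ := nonempty_iff_ne_empty.2 h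
  obtain ⟨ε, hε, hball⟩ := Metric.mem_nhds_iff.1 (mem_interior_iff_mem_nhds.1 hu)
  rw [Real.ball_eq_Ioo] at hball
  have hwidth : Tendsto (fun n => ∑' k, (M (n + k) - m (n + k))) atTop (𝓝 0) := by
    simpa only [add_comm] using tendsto_sum_nat_add fun k => M k - m k
  obtain ⟨K, hK⟩ := eventually_atTop.1 (hwidth.eventually (gt_mem_nhds hε))
  obtain ⟨t, ht⟩ := exists_Ioo_subset_tailSumset_add hm hM hm_sum hM_sum hgap
    (by linarith) hball K
  have hsmall := hK (N + K) (Nat.le_add_left K N)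
  rw [tsum_nat_add_sub hm_sum hM_sum] at hsmall
  have hlo := tailSumset_subset_Icc hm hM hm_sum hM_sum (N + K)
    (ht (show u - ε / 2 + t ∈ _ from ⟨by linarith, by linarith⟩))
  have hhi := tailSumset_subset_Icc hm hM hm_sum hM_sum (N + K)
    (ht (show u + ε / 2 + t ∈ _ from ⟨by linarith, by linarith⟩))
  linarith [hlo.1, hhi.2]

end Tail

theorem stmt9_general (X : ℕ → Finset ℝ) (M m δ : ℕ → ℝ)
    (hXpos : ∀ n, ∀ a ∈ X n, (0 : ℝ) ≤ a)
    (hM : ∀ n, IsGreatest (X n : Set ℝ) (M n))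
    (hm : ∀ n, IsLeast (X n : Set ℝ) (m n))
    (hδ : ∀ n, IsLeast {d : ℝ | ∃ a ∈ X n, ∃ b ∈ X n, a < b ∧
        (∀ c ∈ X n, c ≤ a ∨ b ≤ c) ∧ d = b - a} (δ n))
    (hsum : Summable M)
    (hcond : ∀ᶠ n in atTop, (∑' k : ℕ, (M (n + 1 + k) - m (n + 1 + k))) < δ n) :
    IsClosed {y : ℝ | ∃ x : ℕ → ℝ, (∀ n, x n ∈ X n) ∧ HasSum x y} ∧
      interior {y : ℝ | ∃ x : ℕ → ℝ, (∀ n, x n ∈ X n) ∧ HasSum x y} = ∅ := by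
  obtain ⟨N, hN⟩ := eventually_atTop.1 hcond
  have hm_le : ∀ n, ∀ a ∈ X n, m n ≤ a := fun n _ ha => (hm n).2 ha
  have hle_M : ∀ n, ∀ a ∈ X n, a ≤ M n := fun n _ ha => (hM n).2 ha
  have hm_sum : Summable m :=
    hsum.of_nonneg_of_le (fun n => hXpos n _ (hm n).1) fun n => hle_M n _ (hm n).1
  have hclosed (n : ℕ) : IsClosed (tailSumset X n) :=
    (isCompact_sumset _ (fun k a ha => (Real.norm_of_nonneg (hXpos _ a ha)).trans_le
      (hle_M _ a ha)) (hsum.comp_injective (add_right_injective n))).isClosed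
  have hgap : ∀ n ≥ N, ∀ a ∈ X n, ∀ b ∈ X n, a < b →
      ∑' k, (M (n + 1 + k) - m (n + 1 + k)) < b - a := fun n hn a ha b hb hab =>
    (hN n hn).trans_le (le_sub_of_mem_lowerBounds_gaps (hδ n).2 ha hb hab)
  change IsClosed (sumset X) ∧ interior (sumset X) = ∅
  rw [← tailSumset_zero]
  exact ⟨hclosed 0, interior_tailSumset_eq_empty_of_le hclosed
    (interior_tailSumset_eq_empty hm_le hle_M hm_sum hsum hgap) (Nat.zero_le N)⟩

/-- Generalized Kakeya lemma, part (b). Here `δ n` is the smallest gap between consecutive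
elements of `X n`. If `r n < δ n` holds for all sufficiently large `n`, then the sumset is a
closed set with empty interior. -/
theorem stmt9 (X : ℕ → Finset ℝ) (M m δ : ℕ → ℝ)
    (hXpos : ∀ n, ∀ a ∈ X n, (0 : ℝ) ≤ a)
    (hcard : ∀ n, 2 ≤ (X n).card)
    (hM : ∀ n, IsGreatest (X n : Set ℝ) (M n))
    (hm : ∀ n, IsLeast (X n : Set ℝ) (m n))
    (hδ : ∀ n, IsLeast {d : ℝ | ∃ a ∈ X n, ∃ b ∈ X n, a < b ∧
        (∀ c ∈ X n, c ≤ a ∨ b ≤ c) ∧ d = b - a} (δ n))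
    (hsum : Summable M)
    (hcond : ∀ᶠ n in atTop, (∑' k : ℕ, (M (n + 1 + k) - m (n + 1 + k))) < δ n) :
    IsClosed {y : ℝ | ∃ x : ℕ → ℝ, (∀ n, x n ∈ X n) ∧ HasSum x y} ∧
      interior {y : ℝ | ∃ x : ℕ → ℝ, (∀ n, x n ∈ X n) ∧ HasSum x y} = ∅ :=
  stmt9_general X M m δ hXpos hM hm hδ hsum hcond
end

section
/- The sum of the series ∑_{n=1}^∞ 1/∏_{i=1}^{n} (n+i) = ∑_{n=1}^∞ 1/((n+1)(n+2)⋯(2n)) equals e^{1/4} · ∫_0^{1/2} e^{−t²} dt. -/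
/-!
Write `e^{1/4} e^{-t²} = e^{1/4 - t²}` and expand the exponential: the integral becomes
`∑ₙ (1/n!) ∫₀^{1/2} (1/4 - t²)ⁿ dt`. Differentiating `t (a² - t²)ⁿ⁺¹` gives the Wallis-type
recursion `(2n+3) Iₙ₊₁ = 2(n+1) a² Iₙ` for `Iₙ = ∫₀^a (a² - t²)ⁿ dt`, whence
`Iₙ = a^{2n+1} (2ⁿ n!)² / (2n+1)!`. At `a = 1/2` the `n`-th term is `n!/(2 (2n+1)!) = (n+1)!/(2n+2)!`,
which is the reciprocal of `(n+2)(n+3)⋯(2n+2)`.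
-/

open Finset Nat intervalIntegral

theorem prod_Icc_add_self_eq_ascFactorial (m : ℕ) :
    ∏ i ∈ Icc 1 m, (m + i) = (m + 1).ascFactorial m := by
  rw [ascFactorial_eq_prod_range, range_eq_Ico, ← Ico_add_one_right_eq_Icc,
    ← prod_Ico_add' (fun i => m + i) 0 m 1]
  exact prod_congr rfl fun i _ => by ring

theorem cast_prod_Icc_add_self (m : ℕ) :
    ((∏ i ∈ Icc 1 m, (m + i) : ℕ) : ℝ) = (2 * m)! / m ! := by
  rw [eq_div_iff (by positivity), prod_Icc_add_self_eq_ascFactorial, two_mul, mul_comm,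
    ← factorial_mul_ascFactorial]
  push_cast; ring

theorem hasDerivAt_mul_sub_sq_pow (c t : ℝ) (n : ℕ) :
    HasDerivAt (fun t => t * (c - t ^ 2) ^ (n + 1))
      ((2 * n + 3) * (c - t ^ 2) ^ (n + 1) - 2 * (n + 1) * c * (c - t ^ 2) ^ n) t := by
  refine ((hasDerivAt_id' t).mul (((hasDerivAt_pow 2 t).const_sub c).pow (n + 1))).congr_deriv ?_
  simp only [Nat.add_sub_cancel, Pi.pow_apply]
  push_cast
  ring

theorem integral_sq_sub_sq_pow_succ (a : ℝ) (n : ℕ) :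
    (2 * n + 3) * ∫ t in (0 : ℝ)..a, (a ^ 2 - t ^ 2) ^ (n + 1)
      = 2 * (n + 1) * a ^ 2 * ∫ t in (0 : ℝ)..a, (a ^ 2 - t ^ 2) ^ n := by
  have hFTC := integral_eq_sub_of_hasDerivAt (a := 0) (b := a)
    (fun t _ => hasDerivAt_mul_sub_sq_pow (a ^ 2) t n)
    (by apply Continuous.intervalIntegrable; fun_prop)
  rw [integral_sub (by apply Continuous.intervalIntegrable; fun_prop)
    (by apply Continuous.intervalIntegrable; fun_prop), integral_const_mul, integral_const_mul] at hFTC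
  simp only [sub_self, zero_pow (Nat.succ_ne_zero n), mul_zero] at hFTC
  linear_combination hFTC

theorem integral_sq_sub_sq_pow (a : ℝ) (n : ℕ) :
    ∫ t in (0 : ℝ)..a, (a ^ 2 - t ^ 2) ^ n = a ^ (2 * n + 1) * (2 ^ n * n !) ^ 2 / (2 * n + 1)! := by
  induction n with
  | zero => simp
  | succ n ih =>
    have hrec := integral_sq_sub_sq_pow_succ a n
    have hfac : ((2 * (n + 1) + 1)! : ℝ) = (2 * n + 3) * (2 * n + 2) * (2 * n + 1)! := by
      rw [show 2 * (n + 1) + 1 = (2 * n + 1) + 1 + 1 by ring, factorial_succ (2 * n + 1 + 1),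
        factorial_succ (2 * n + 1)]
      push_cast; ring
    rw [ih, mul_div_assoc', eq_div_iff (by positivity)] at hrec
    rw [eq_div_iff (by positivity), hfac, factorial_succ n, Nat.cast_mul, Nat.cast_add_one]
    linear_combination (2 * n + 2) * hrec

theorem Real.hasSum_pow_div_factorial (x : ℝ) : HasSum (fun n => x ^ n / n !) (Real.exp x) := by
  rw [Real.exp_eq_exp_ℝ]
  exact NormedSpace.expSeries_div_hasSum_exp x

theorem hasSum_integral_pow_div_factorial {f : ℝ → ℝ} (hf : Continuous f) (a b : ℝ) :
    HasSum (fun n => ∫ t in a..b, f t ^ n / n !) (∫ t in a..b, Real.exp (f t)) := by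
  refine hasSum_integral_of_dominated_convergence (fun n t => |f t| ^ n / n !)
    (fun n => by fun_prop) (fun n => .of_forall fun t _ => ?_)
    (.of_forall fun t _ => Real.summable_pow_div_factorial |f t|) ?_
    (.of_forall fun t _ => Real.hasSum_pow_div_factorial (f t))
  · rw [norm_div, norm_pow, Real.norm_eq_abs, RCLike.norm_natCast]
  · simp_rw [(Real.hasSum_pow_div_factorial _).tsum_eq]
    exact (by fun_prop : Continuous fun t => Real.exp |f t|).intervalIntegrable a b

/-- The sum `∑_{n=1}^∞ 1/((n+1)(n+2)⋯(2n))` equals `e^{1/4} ∫_0^{1/2} e^{−t²} dt`. -/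
theorem stmt11 :
    ∑' n : ℕ, (1 : ℝ) / ((∏ i ∈ Finset.Icc 1 (n + 1), (n + 1 + i) : ℕ) : ℝ)
      = Real.exp (1 / 4) * ∫ t in (0 : ℝ)..(1 / 2), Real.exp (-t ^ 2) := by
  have hterm (n : ℕ) : (1 : ℝ) / ((∏ i ∈ Icc 1 (n + 1), (n + 1 + i) : ℕ) : ℝ)
      = ∫ t in (0 : ℝ)..(1 / 2), (1 / 4 - t ^ 2) ^ n / n ! := by
    have hfac : ((2 * (n + 1))! : ℝ) = (2 * n + 2) * (2 * n + 1)! := by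
      rw [show 2 * (n + 1) = 2 * n + 1 + 1 by ring, factorial_succ (2 * n + 1)]
      push_cast; ring
    have hhalf : (1 / 2 : ℝ) ^ (2 * n + 1) * (2 ^ n) ^ 2 = 1 / 2 := by
      rw [pow_succ, ← pow_mul, mul_comm n 2, mul_right_comm, ← mul_pow]
      norm_num
    rw [cast_prod_Icc_add_self, integral_div, show (1 / 4 : ℝ) = (1 / 2) ^ 2 by norm_num,
      integral_sq_sub_sq_pow, mul_pow, ← mul_assoc, hhalf, hfac, factorial_succ n]
    push_cast
    field_simp
  have hexp : Real.exp (1 / 4) * ∫ t in (0 : ℝ)..(1 / 2), Real.exp (-t ^ 2)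
      = ∫ t in (0 : ℝ)..(1 / 2), Real.exp (1 / 4 - t ^ 2) := by
    simp_rw [← integral_const_mul, ← Real.exp_add, sub_eq_add_neg]
  rw [tsum_congr hterm, hexp]
  exact (hasSum_integral_pow_div_factorial (by fun_prop) 0 (1 / 2)).tsum_eq
end

section
/- For every integer N ≥ 2, ∑_{m=1}^{N} C(m+N−2, N−1) · 1/(N · ∏_{i=1}^{N} (m+i)) < 1/N!, where C(·,·) denotes the binomial coefficient. Equivalently, ∑_{m=1}^{N} (1/((m+N)·N!)) · ((m+N−2)(m+N−3)⋯m) / ((m+N−1)(m+N−2)⋯(m+1)) < 1/N!. -/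
lemma fact_mul_prod (m N : ℕ) :
    m.factorial * ∏ i ∈ Finset.Icc 1 N, (m + i) = (m + N).factorial := by
  induction N with
  | zero => simp
  | succ n ih =>
    rw [Finset.prod_Icc_succ_top (by omega : 1 ≤ n + 1), ← mul_assoc, ih,
      show m + (n + 1) = (m + n) + 1 by omega, Nat.factorial_succ]
    ring

lemma nat_key (m N : ℕ) (hm : 1 ≤ m) (hN : 2 ≤ N) :
    Nat.choose (m + N - 2) (N - 1) * N.factorial * ((m + N) * (m + N - 1))
      = m * N * ∏ i ∈ Finset.Icc 1 N, (m + i) := by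
  have h1 : N - 1 ≤ m + N - 2 := by omega
  have e1 := Nat.choose_mul_factorial_mul_factorial h1
  rw [show m + N - 2 - (N - 1) = m - 1 by omega] at e1
  have e2 := fact_mul_prod m N
  have e3 : (m + N).factorial = (m + N) * ((m + N - 1) * (m + N - 2).factorial) := by
    obtain ⟨k, hk⟩ : ∃ k, m + N = k + 2 := ⟨m + N - 2, by omega⟩
    rw [hk, show k + 2 - 1 = k + 1 by omega, show k + 2 - 2 = k by omega,
      Nat.factorial_succ, Nat.factorial_succ]
  have e4 : N.factorial = N * (N - 1).factorial := by
    conv_lhs => rw [show N = (N - 1) + 1 by omega]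
    rw [Nat.factorial_succ, show N - 1 + 1 = N by omega]
  have e5 : m.factorial = m * (m - 1).factorial := by
    conv_lhs => rw [show m = (m - 1) + 1 by omega]
    rw [Nat.factorial_succ, show m - 1 + 1 = m by omega]
  have hpos : 0 < (N - 1).factorial * (m - 1).factorial := by positivity
  apply Nat.eq_of_mul_eq_mul_right hpos
  calc Nat.choose (m + N - 2) (N - 1) * N.factorial * ((m + N) * (m + N - 1)) *
        ((N - 1).factorial * (m - 1).factorial)
      = (Nat.choose (m + N - 2) (N - 1) * (N - 1).factorial * (m - 1).factorial) *
        (N.factorial * ((m + N) * (m + N - 1))) := by ring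
    _ = (m + N - 2).factorial * (N.factorial * ((m + N) * (m + N - 1))) := by rw [e1]
    _ = N.factorial * ((m + N) * ((m + N - 1) * (m + N - 2).factorial)) := by ring
    _ = N.factorial * (m + N).factorial := by rw [← e3]
    _ = N.factorial * (m.factorial * ∏ i ∈ Finset.Icc 1 N, (m + i)) := by rw [e2]
    _ = (N * (N - 1).factorial) * ((m * (m - 1).factorial) * ∏ i ∈ Finset.Icc 1 N, (m + i)) := by
        rw [← e4, ← e5]
    _ = m * N * (∏ i ∈ Finset.Icc 1 N, (m + i)) *
        ((N - 1).factorial * (m - 1).factorial) := by ring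

lemma real_key (m N : ℕ) (hm : 1 ≤ m) (hN : 2 ≤ N) :
    (Nat.choose (m + N - 2) (N - 1) : ℝ) *
        (1 / ((N : ℝ) * ((∏ i ∈ Finset.Icc 1 N, (m + i) : ℕ) : ℝ)))
      = (m : ℝ) / ((N.factorial : ℝ) * (((m : ℝ) + N) * ((m : ℝ) + N - 1))) := by
  have hP : 0 < (∏ i ∈ Finset.Icc 1 N, (m + i)) := by
    apply Finset.prod_pos; intro i hi; omega
  have hnat := nat_key m N hm hN
  have hcast : (Nat.choose (m + N - 2) (N - 1) : ℝ) * (N.factorial : ℝ) *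
      (((m : ℝ) + N) * (((m + N - 1 : ℕ) : ℝ)))
      = (m : ℝ) * N * ((∏ i ∈ Finset.Icc 1 N, (m + i) : ℕ) : ℝ) := by
    exact_mod_cast congrArg (Nat.cast : ℕ → ℝ) hnat
  have h1 : ((m + N - 1 : ℕ) : ℝ) = (m : ℝ) + N - 1 := by
    rw [Nat.cast_sub (by omega : 1 ≤ m + N)]; push_cast; ring
  rw [h1] at hcast
  have hPpos : (0 : ℝ) < ((∏ i ∈ Finset.Icc 1 N, (m + i) : ℕ) : ℝ) := by exact_mod_cast hP
  have hNpos : (0 : ℝ) < (N : ℝ) := by exact_mod_cast (by omega : 0 < N)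
  have hfpos : (0 : ℝ) < (N.factorial : ℝ) := by exact_mod_cast N.factorial_pos
  have hq1 : (0 : ℝ) < (m : ℝ) + N := by positivity
  have hq2 : (0 : ℝ) < (m : ℝ) + N - 1 := by
    have : (1 : ℝ) ≤ (m : ℝ) := by exact_mod_cast hm
    nlinarith
  push_cast at hcast hPpos ⊢
  field_simp
  linear_combination hcast

/-- For every `N ≥ 2`, `∑_{m=1}^{N} C(m+N−2, N−1)/(N(m+1)⋯(m+N)) < 1/N!`. -/
theorem stmt15 (N : ℕ) (hN : 2 ≤ N) :
    ∑ m ∈ Finset.Icc 1 N, (Nat.choose (m + N - 2) (N - 1) : ℝ) *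
        (1 / ((N : ℝ) * ((∏ i ∈ Finset.Icc 1 N, (m + i) : ℕ) : ℝ)))
      < 1 / (Nat.factorial N : ℝ) := by
  have hfpos : (0 : ℝ) < (N.factorial : ℝ) := by exact_mod_cast N.factorial_pos
  have hNR : (2 : ℝ) ≤ (N : ℝ) := by exact_mod_cast hN
  have hden : (0 : ℝ) < 4 * (N : ℝ) - 2 := by linarith
  have hb : ∀ m ∈ Finset.Icc 1 N, (Nat.choose (m + N - 2) (N - 1) : ℝ) *
      (1 / ((N : ℝ) * ((∏ i ∈ Finset.Icc 1 N, (m + i) : ℕ) : ℝ)))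
      ≤ 1 / ((N.factorial : ℝ) * (4 * (N : ℝ) - 2)) := by
    intro m hm
    rw [Finset.mem_Icc] at hm
    rw [real_key m N hm.1 hN]
    have hmR : (1 : ℝ) ≤ (m : ℝ) := by exact_mod_cast hm.1
    have hmN : (m : ℝ) ≤ (N : ℝ) := by exact_mod_cast hm.2
    have hq1 : (0 : ℝ) < (m : ℝ) + N := by linarith
    have hq2 : (0 : ℝ) < (m : ℝ) + N - 1 := by linarith
    rw [div_le_div_iff₀ (by positivity) (by positivity)]
    -- need m * (N! * (4N-2)) ≤ N! * ((m+N)(m+N-1))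
    have hkey : (m : ℝ) * (4 * (N : ℝ) - 2) ≤ ((m : ℝ) + N) * ((m : ℝ) + N - 1) := by
      rcases eq_or_lt_of_le hm.2 with h | h
      · subst h; nlinarith
      · have : (m : ℝ) + 1 ≤ (N : ℝ) := by exact_mod_cast h
        nlinarith
    nlinarith [hfpos, hkey]
  calc ∑ m ∈ Finset.Icc 1 N, (Nat.choose (m + N - 2) (N - 1) : ℝ) *
        (1 / ((N : ℝ) * ((∏ i ∈ Finset.Icc 1 N, (m + i) : ℕ) : ℝ)))
      ≤ ∑ m ∈ Finset.Icc 1 N, 1 / ((N.factorial : ℝ) * (4 * (N : ℝ) - 2)) :=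
        Finset.sum_le_sum hb
    _ = (N : ℝ) * (1 / ((N.factorial : ℝ) * (4 * (N : ℝ) - 2))) := by
        rw [Finset.sum_const, Nat.card_Icc]
        simp [nsmul_eq_mul]
    _ < 1 / (Nat.factorial N : ℝ) := by
        rw [mul_one_div, div_lt_div_iff₀ (by positivity) hfpos]
        nlinarith
end

section
/- For all positive integers N, K, m with N ≥ K and m > N, the difference of binomial coefficients C(m+N−2, N−1) − C(m−K+N−2, N−1) is at most (N+K−2)·(m+N−2)^{N−2}/(N−2)!, provided N ≥ 2. -/
lemma choose_sub_choose_le (r b : ℕ) : ∀ a, b ≤ a →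
    a.choose (r+1) - b.choose (r+1) ≤ (a - b) * a.choose r := by
  intro a
  induction a with
  | zero => intro h; simp [Nat.le_zero.mp h]
  | succ a ih =>
    intro h
    rcases Nat.lt_or_ge b (a+1) with hb | hb
    · have hb' : b ≤ a := Nat.lt_succ_iff.mp hb
      have h1 : (a+1).choose (r+1) = a.choose (r+1) + a.choose r := by
        rw [Nat.choose_succ_succ' a r]; ring
      calc (a+1).choose (r+1) - b.choose (r+1)
          ≤ (a.choose (r+1) - b.choose (r+1)) + a.choose r := by omega
        _ ≤ (a - b) * a.choose r + a.choose r := by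
            exact Nat.add_le_add_right (ih hb') _
        _ = (a + 1 - b) * a.choose r := by
            have : a + 1 - b = (a - b) + 1 := by omega
            rw [this]; ring
        _ ≤ (a + 1 - b) * (a+1).choose r :=
            Nat.mul_le_mul_left _ (Nat.choose_le_choose r (Nat.le_succ a))
    · have : b = a + 1 := le_antisymm h hb
      simp [this]

/-- For `N ≥ 2`, `1 ≤ K ≤ N` and `m > N`, the difference
`C(m+N−2, N−1) − C(m−K+N−2, N−1)` is at most `(N+K−2)(m+N−2)^{N−2}/(N−2)!`. -/
theorem stmt16 (N K m : ℕ) (hN : 2 ≤ N) (hK : 1 ≤ K) (hKN : K ≤ N) (hm : N < m) :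
    (Nat.choose (m + N - 2) (N - 1) : ℝ) - (Nat.choose (m - K + N - 2) (N - 1) : ℝ)
      ≤ ((N : ℝ) + K - 2) * ((m : ℝ) + N - 2) ^ (N - 2) / (Nat.factorial (N - 2) : ℝ) := by
  set r := N - 2 with hr
  set a := m + N - 2 with ha
  set b := m - K + N - 2 with hb
  have hrN : N - 1 = r + 1 := by omega
  have hba : b ≤ a := by omega
  have hab : a - b = K := by omega
  have hmono : b.choose (r+1) ≤ a.choose (r+1) := Nat.choose_le_choose _ hba
  have key : a.choose (r+1) - b.choose (r+1) ≤ K * a.choose r := by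
    rw [← hab]; exact choose_sub_choose_le r b a hba
  have hcast : (a.choose (r+1) : ℝ) - (b.choose (r+1) : ℝ) ≤ (K : ℝ) * a.choose r := by
    have := Nat.cast_le (α := ℝ) |>.mpr key
    push_cast [Nat.cast_sub hmono] at this ⊢
    linarith
  have hpow : (a.choose r : ℝ) ≤ (a : ℝ) ^ r / (r.factorial : ℝ) :=
    (Nat.choose_le_pow_div r a)
  have haR : ((a : ℝ)) = (m : ℝ) + N - 2 := by
    rw [ha]; push_cast [Nat.cast_sub (by omega : 2 ≤ m + N)]; ring
  rw [hrN]
  calc (a.choose (r+1) : ℝ) - (b.choose (r+1) : ℝ)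
      ≤ (K : ℝ) * a.choose r := hcast
    _ ≤ (K : ℝ) * ((a : ℝ) ^ r / (r.factorial : ℝ)) := by
        apply mul_le_mul_of_nonneg_left hpow (by positivity)
    _ ≤ ((N : ℝ) + K - 2) * ((a : ℝ) ^ r / (r.factorial : ℝ)) := by
        apply mul_le_mul_of_nonneg_right _ (by positivity)
        have : (2:ℝ) ≤ N := by exact_mod_cast hN
        linarith
    _ = ((N : ℝ) + K - 2) * ((m : ℝ) + N - 2) ^ r / (r.factorial : ℝ) := by
        rw [haR]; ring
end
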